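/- arXiv:2405.10044 — 8 statements merged into one kernel-verified Lean document; each statement's English description precedes it below -/
import Mathlib

section
/- The free group on two generators embeds into the free product of the cyclic groups Z/2Z and Z/3Z; that is, there exists an injective group homomorphism from the free group F_2 into Z_2 * Z_3. -/
/-!
Let `x`, `y` generate `ℤ₂ * ℤ₃`. Since `S² = (ST)³ = -1` acts trivially on `ℍ`, `x ↦ S`, `y ↦ ST`
defines an action of `ℤ₂ * ℤ₃` on `ℍ` in which `xy` acts as `T : z ↦ z + 1`. The translation `T²`
maps the complement of `re z ≤ -1` into `re z ≥ 1`, and `T⁻²` the complement of `re z ≥ 1` into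
`re z ≤ -1`; both half planes lie outside the unit disc, so `S` maps them into it. Ping-pong on
these half planes and their `S`-images shows that `T²` and `S T² S⁻¹` generate a free group of
permutations of `ℍ`, so `(xy)²` and `x (xy)² x⁻¹` generate a free subgroup of `ℤ₂ * ℤ₃`.
-/

open Function ModularGroup UpperHalfPlane
open scoped MatrixGroups Pointwise

lemma pairwise_disjoint_on_fin_two {α : Type*} [PartialOrder α] [OrderBot α] {a b : α}
    (h : Disjoint a b) : Pairwise (Disjoint on ![a, b]) := by
  intro i j hij
  fin_cases i <;> fin_cases j <;> simp_all [onFun, h.symm]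

section PingPong

-- `Type`, not `Type*`: Mathlib's ping-pong lemma puts the group in the universe of the index type.
variable {G : Type} {α : Type*} [Group G] [MulAction G α]

lemma conj_smul_compl_subset {a g : G} {X Y : Set α} (h : a • Yᶜ ⊆ X) :
    (g * a * g⁻¹) • (g • Y)ᶜ ⊆ g • X := by
  rw [← Set.smul_set_compl, mul_smul, mul_smul, inv_smul_smul]
  exact Set.smul_set_mono h

theorem FreeGroup.injective_lift_conj_of_ping_pong {a g : G} {X Y : Set α}
    (hX : X.Nonempty) (hXY : Disjoint X Y) (hg : Disjoint (g • (X ∪ Y)) (X ∪ Y))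
    (ha : a • Yᶜ ⊆ X) (ha' : a⁻¹ • Xᶜ ⊆ Y) :
    Injective (FreeGroup.lift ![a, g * a * g⁻¹]) := by
  rw [Set.smul_set_union] at hg
  refine FreeGroup.injective_lift_of_ping_pong ![a, g * a * g⁻¹] ![X, g • X] ![Y, g • Y] ?_
    (pairwise_disjoint_on_fin_two ?_) (pairwise_disjoint_on_fin_two ?_) ?_ ?_ ?_
  · intro i; fin_cases i
    exacts [hX, hX.smul_set]
  · exact (hg.mono_left Set.subset_union_left).mono_right Set.subset_union_left |>.symm
  · exact (hg.mono_left Set.subset_union_right).mono_right Set.subset_union_right |>.symm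
  · intro i j; fin_cases i <;> fin_cases j
    · exact hXY
    · exact (hg.mono_left Set.subset_union_right).mono_right Set.subset_union_left |>.symm
    · exact (hg.mono_left Set.subset_union_left).mono_right Set.subset_union_right
    · exact Set.disjoint_smul_set.mpr hXY
  · intro i; fin_cases i
    exacts [ha, conj_smul_compl_subset ha]
  · intro i; fin_cases i
    · exact ha'
    · simpa [mul_assoc] using conj_smul_compl_subset (g := g) ha'

end PingPong

def zmodPowersHom {H : Type*} [Group H] (n : ℕ) (h : H) (hh : h ^ n = 1) :
    Multiplicative (ZMod n) →* H :=
  AddMonoidHom.toMultiplicativeLeft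
    (ZMod.lift n ⟨MonoidHom.toAdditiveRight (zpowersHom H h),
      congrArg Additive.ofMul (by simpa using hh)⟩)

lemma zmodPowersHom_ofAdd_one {H : Type*} [Group H] (n : ℕ) (h : H) (hh : h ^ n = 1) :
    zmodPowersHom n h hh (Multiplicative.ofAdd 1) = h := by
  rw [← Int.cast_one]
  exact (congrArg Additive.toMul (ZMod.lift_coe n _ 1)).trans (zpow_one h)

lemma one_lt_normSq_of_one_le_abs_re {z : ℍ} (h : 1 ≤ |z.re|) : 1 < Complex.normSq z := by
  rw [Complex.normSq_apply, coe_re, coe_im]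
  nlinarith [abs_mul_abs_self z.re, z.im_pos]

lemma disjoint_S_smul_one_lt_normSq :
    Disjoint (S • {z : ℍ | 1 < Complex.normSq z}) {z | 1 < Complex.normSq z} := by
  rw [Set.disjoint_left]
  rintro _ ⟨z, hz, rfl⟩
  exact (normSq_S_smul_lt_one hz).not_gt

lemma T_sq_smul_re_le_neg_one_compl :
    T ^ 2 • {z : ℍ | z.re ≤ -1}ᶜ ⊆ {z | 1 ≤ z.re} := by
  refine Set.smul_set_subset_iff.mpr fun z (hz : ¬z.re ≤ -1) ↦ ?_
  have := re_T_zpow_smul z 2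
  rw [Set.mem_ofPred_eq, ← zpow_natCast]
  push_cast at this ⊢
  linarith

lemma T_sq_inv_smul_one_le_re_compl :
    (T ^ 2)⁻¹ • {z : ℍ | 1 ≤ z.re}ᶜ ⊆ {z | z.re ≤ -1} := by
  refine Set.smul_set_subset_iff.mpr fun z (hz : ¬1 ≤ z.re) ↦ ?_
  have := re_T_zpow_smul z (-2)
  rw [Set.mem_ofPred_eq, ← zpow_natCast, ← zpow_neg]
  push_cast at this ⊢
  linarith

local notation "ρ" => MulAction.toPermHom SL(2, ℤ) ℍ

lemma toPermHom_neg (g : SL(2, ℤ)) : ρ (-g) = ρ g := Equiv.ext (SL_neg_smul g)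

lemma toPermHom_S_pow_two : ρ S ^ 2 = 1 := by
  rw [← map_pow, show S ^ 2 = -1 by decide, toPermHom_neg, map_one]

lemma toPermHom_S_mul_T_pow_three : ρ (S * T) ^ 3 = 1 := by
  rw [← map_pow, show (S * T) ^ 3 = -1 by decide, toPermHom_neg, map_one]

noncomputable def modularPerm :
    Monoid.Coprod (Multiplicative (ZMod 2)) (Multiplicative (ZMod 3)) →* Equiv.Perm ℍ :=
  Monoid.Coprod.lift (zmodPowersHom 2 (ρ S) toPermHom_S_pow_two)
    (zmodPowersHom 3 (ρ (S * T)) toPermHom_S_mul_T_pow_three)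

lemma modularPerm_inl : modularPerm (.inl (.ofAdd 1)) = ρ S := by
  simp [modularPerm, zmodPowersHom_ofAdd_one]

lemma modularPerm_inr : modularPerm (.inr (.ofAdd 1)) = ρ (S * T) := by
  simp [modularPerm, zmodPowersHom_ofAdd_one]

lemma modularPerm_inl_mul_inr : modularPerm (.inl (.ofAdd 1) * .inr (.ofAdd 1)) = ρ T := by
  rw [map_mul, modularPerm_inl, modularPerm_inr, ← map_mul, ← mul_assoc,
    show S * S * T = -T by decide, toPermHom_neg]

theorem injective_lift_toPermHom_T_sq :
    Injective (FreeGroup.lift ![ρ (T ^ 2), ρ S * ρ (T ^ 2) * (ρ S)⁻¹]) := by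
  have hXY : Disjoint {z : ℍ | 1 ≤ z.re} {z | z.re ≤ -1} :=
    Set.disjoint_left.mpr fun z (h₁ : 1 ≤ z.re) (h₂ : z.re ≤ -1) ↦ by linarith
  have hsub : {z : ℍ | 1 ≤ z.re} ∪ {z | z.re ≤ -1} ⊆ {z | 1 < Complex.normSq z} := by
    rintro z (h | h)
    exacts [one_lt_normSq_of_one_le_abs_re (le_abs.mpr (.inl h)),
      one_lt_normSq_of_one_le_abs_re (le_abs.mpr (.inr (le_neg.mpr h)))]
  exact FreeGroup.injective_lift_conj_of_ping_pong ⟨(1 : ℝ) +ᵥ I, by simp⟩ hXY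
    (disjoint_S_smul_one_lt_normSq.mono (Set.smul_set_mono hsub) hsub)
    T_sq_smul_re_le_neg_one_compl T_sq_inv_smul_one_le_re_compl

/-- The free group on two generators embeds into the free product
`ℤ/2 * ℤ/3` of the cyclic groups of orders 2 and 3: there is an injective
group homomorphism `F₂ → ℤ₂ * ℤ₃`. -/
theorem freeGroup_two_embeds_in_coprod_zmod_two_zmod_three :
    ∃ φ : FreeGroup (Fin 2) →*
        Monoid.Coprod (Multiplicative (ZMod 2)) (Multiplicative (ZMod 3)),
      Function.Injective φ := by
  set x : Monoid.Coprod (Multiplicative (ZMod 2)) (Multiplicative (ZMod 3)) := .inl (.ofAdd 1)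
  set a := (x * .inr (.ofAdd 1)) ^ 2
  have hx : modularPerm x = ρ S := modularPerm_inl
  have ha : modularPerm a = ρ (T ^ 2) := by rw [map_pow, modularPerm_inl_mul_inr, map_pow]
  have hcomp : modularPerm.comp (FreeGroup.lift ![a, x * a * x⁻¹]) =
      FreeGroup.lift ![ρ (T ^ 2), ρ S * ρ (T ^ 2) * (ρ S)⁻¹] :=
    FreeGroup.ext_hom _ _ <| Fin.forall_fin_two.mpr <| by
      simp only [MonoidHom.comp_apply, FreeGroup.lift_apply_of, Matrix.cons_val_zero,
        Matrix.cons_val_one, map_mul, map_inv, hx, ha, and_self]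
  refine ⟨FreeGroup.lift ![a, x * a * x⁻¹], Injective.of_comp (f := modularPerm) ?_⟩
  rw [← MonoidHom.coe_comp, hcomp]
  exact injective_lift_toPermHom_T_sq
end

section
/- Let HΓ be a finite hypergraph and let f_0 be an easy edge generating the easy edge set F. Then the set S consisting of all edges not in F together with all vertices not belonging to the source of any edge of F is ideally closed, provided that the range of f_0 equals the source of some edge of F. -/
/-! Basic notions of (finite, directed) hypergraphs, following
Trieb–Weber-style hypergraph C*-algebra combinatorics. Vertices and edges
are labelled by natural numbers. -/

structure FinHypergraph where
  V : Finset ℕ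
  E : Finset ℕ
  r : ℕ → Finset ℕ
  s : ℕ → Finset ℕ

namespace FinHypergraph

/-- Well-formedness: sources and ranges of edges consist of vertices,
and every edge has a nonempty source. -/
def WF (H : FinHypergraph) : Prop :=
  ∀ e ∈ H.E, H.s e ⊆ H.V ∧ H.r e ⊆ H.V ∧ (H.s e).Nonempty

/-- A vertex is a sink if no edge has it in its source. -/
def IsSink (H : FinHypergraph) (v : ℕ) : Prop := ∀ e ∈ H.E, v ∉ H.s e

/-- A path is a nonempty list of edges such that the range of each edge
meets the source of the next one. -/
def IsPath (H : FinHypergraph) (l : List ℕ) : Prop :=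
  l ≠ [] ∧ (∀ e ∈ l, e ∈ H.E) ∧
    List.Chain' (fun a b => (H.r a ∩ H.s b).Nonempty) l

/-- There is a path starting with edge `e` and ending with edge `f`. -/
def PathTo (H : FinHypergraph) (e f : ℕ) : Prop :=
  ∃ l : List ℕ, H.IsPath l ∧ l.head? = some e ∧ l.getLast? = some f

/-- The set of edges from which there is a path ending with `f₀`
(the "easy edge set" when `f₀` is easy). -/
noncomputable def easySet (H : FinHypergraph) (f₀ : ℕ) : Finset ℕ :=
  @Finset.filter ℕ (fun e => H.PathTo e f₀) (fun _ => Classical.propDecidable _) H.E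

/-- An edge `f₀` is easy if every edge from which there is a path to `f₀`
has exactly one vertex in its source and exactly one vertex in its range. -/
def IsEasyEdge (H : FinHypergraph) (f₀ : ℕ) : Prop :=
  f₀ ∈ H.E ∧ ∀ f ∈ H.easySet f₀, (H.s f).card = 1 ∧ (H.r f).card = 1

/-- An easy cycle of length `n`, given by edges `f 0, …, f (n-1)` and
range vertices `w 0, …, w (n-1)` (indices taken mod `n`). -/
def IsEasyCycle (H : FinHypergraph) (n : ℕ) (f w : ℕ → ℕ) : Prop :=
  0 < n ∧ (∀ i < n, f i ∈ H.E) ∧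
  (∀ i < n, (H.r (f i) ∩ H.s (f ((i + 1) % n))).Nonempty) ∧
  (∀ i < n, ∀ j < n, (H.r (f i) ∩ H.s (f j)).Nonempty → j = (i + 1) % n) ∧
  (∀ i < n, H.r (f i) = {w i}) ∧
  (∀ i < n, ∀ e ∈ H.E, w i ∈ H.r e → e = f i) ∧
  (∀ i < n, ∀ e ∈ H.E, w i ∈ H.s e → e = f ((i + 1) % n))

/-- A simple quasisink: at most one outgoing edge, which must have empty
range, and at most one incoming edge. -/
def IsSimpleQuasisink (H : FinHypergraph) (w : ℕ) : Prop :=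
  (∀ e ∈ H.E, ∀ f ∈ H.E, w ∈ H.s e → w ∈ H.s f → e = f) ∧
  (∀ e ∈ H.E, w ∈ H.s e → H.r e = ∅) ∧
  (∀ e ∈ H.E, ∀ f ∈ H.E, w ∈ H.r e → w ∈ H.r f → e = f)

/-- Normality of a hypergraph. -/
def Normal (H : FinHypergraph) : Prop :=
  (∀ e ∈ H.E, (H.r e).card ≤ 1) ∧
  (∀ e ∈ H.E,
    (∃ f ∈ H.E, f ≠ e ∧ (H.s e ∩ H.s f).Nonempty) ∨
    ((H.r e).Nonempty ∧ H.r e ⊆ H.s e)) ∧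
  (∀ e ∈ H.E, ∀ f ∈ H.E, e ≠ f → (H.s e ∩ H.s f).card = 1 →
    ((H.s e).card = 1 ∧ (H.s f).card = 1) ∨
    ∃ g ∈ H.E, g ≠ e ∧ (H.s e ∩ H.s f) ⊂ (H.s e ∩ H.s g))

/-- A reduced hypergraph: normal, no easy edge, no easy cycle, and no
edge ending in a simple quasisink. -/
def Reduced (H : FinHypergraph) : Prop :=
  H.Normal ∧ (¬∃ f₀, H.IsEasyEdge f₀) ∧ (¬∃ n f w, H.IsEasyCycle n f w) ∧
  ¬∃ f ∈ H.E, ∃ w, H.r f = {w} ∧ H.IsSimpleQuasisink w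

/-- A set of vertices `SV` and edges `SE` is ideally closed. -/
def IdeallyClosed (H : FinHypergraph) (SV SE : Finset ℕ) : Prop :=
  SV ⊆ H.V ∧ SE ⊆ H.E ∧
  (∀ e ∈ SE, H.r e ⊆ SV) ∧
  (∀ e ∈ H.E, (H.s e ⊆ SV ∨ ((H.r e).Nonempty ∧ H.r e ⊆ SV)) → e ∈ SE) ∧
  (∀ v ∈ H.V, ¬H.IsSink v → (∀ e ∈ H.E, v ∈ H.s e → e ∈ SE) → v ∈ SV)

/-! ### The seven minor operations, as relations -/

def IsVertexDeletion (H H' : FinHypergraph) : Prop :=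
  ∃ v ∈ H.V,
    H'.V = H.V.erase v ∧
    H'.E = H.E.filter (fun e => ¬ H.s e = {v}) ∧
    ∀ e ∈ H'.E, H'.r e = (H.r e).erase v ∧ H'.s e = (H.s e).erase v

def IsEdgeDeletion (H H' : FinHypergraph) : Prop :=
  ∃ f ∈ H.E,
    H'.V = H.V ∧ H'.E = H.E.erase f ∧
    ∀ e ∈ H'.E, H'.r e = H.r e ∧ H'.s e = H.s e

def IsForwardContraction (H H' : FinHypergraph) : Prop :=
  ∃ f ∈ H.E, ∃ w,
    H.s f = {w} ∧
    (∀ e ∈ H.E, e ≠ f → ¬(H.s e ∩ H.s f).Nonempty) ∧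
    (∀ e ∈ H.E, w ∈ H.r e → ¬(H.r e ∩ H.r f).Nonempty) ∧
    H'.V = H.V.erase w ∧ H'.E = H.E.erase f ∧
    ∀ e ∈ H'.E,
      H'.s e = H.s e ∧
      H'.r e = (if w ∈ H.r e then (H.r e).erase w ∪ H.r f else H.r e)

def IsBackwardContractionAt (H H' : FinHypergraph) (f : ℕ) : Prop :=
  f ∈ H.E ∧ ∃ w,
    H.r f = {w} ∧
    (∀ e ∈ H.E, e ≠ f → ¬(H.s e ∩ H.s f).Nonempty) ∧
    (∀ e ∈ H.E, (H.r e ∩ H.s f).Nonempty → w ∉ H.r e) ∧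
    H'.V = H.V.erase w ∧ H'.E = H.E.erase f ∧
    ∀ e ∈ H'.E,
      H'.r e = (if w ∈ H.r e then (H.r e).erase w ∪ H.s f else H.r e) ∧
      H'.s e = (if w ∈ H.s e then (H.s e).erase w ∪ H.s f else H.s e)

def IsBackwardContraction (H H' : FinHypergraph) : Prop :=
  ∃ f, IsBackwardContractionAt H H' f

def IsEdgeCutting (H H' : FinHypergraph) : Prop :=
  ∃ f ∈ H.E,
    H'.V = H.V ∧ H'.E = H.E ∧
    (∀ e ∈ H.E, H'.s e = H.s e) ∧
    (∀ e ∈ H.E, e ≠ f → H'.r e = H.r e) ∧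
    H'.r f = ∅

def IsSourceSeparation (H H' : FinHypergraph) : Prop :=
  ∃ (F : Finset ℕ) (w w' : ℕ),
    w ∈ H.V ∧ w' ∉ H.V ∧ F.Nonempty ∧
    F ⊂ H.E.filter (fun e => w ∈ H.s e) ∧
    H'.V = insert w' H.V ∧ H'.E = H.E ∧
    ∀ e ∈ H.E,
      H'.r e = (if w ∈ H.r e then insert w' (H.r e) else H.r e) ∧
      H'.s e = (if e ∈ F then insert w' ((H.s e).erase w) else H.s e)

def IsRangeDecomposition (H H' : FinHypergraph) : Prop :=
  ∃ f ∈ H.E, ∃ ι : ℕ → ℕ,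
    (H.r f).Nonempty ∧
    (∀ v ∈ H.r f, ι v ∉ H.E) ∧
    Set.InjOn ι (H.r f : Set ℕ) ∧
    H'.V = H.V ∧
    H'.E = H.E.erase f ∪ (H.r f).image ι ∧
    (∀ e ∈ H.E.erase f, H'.r e = H.r e ∧ H'.s e = H.s e) ∧
    (∀ v ∈ H.r f, H'.r (ι v) = {v} ∧ H'.s (ι v) = H.s f)

/-- One application of a minor operation. -/
def MinorStep (H H' : FinHypergraph) : Prop :=
  IsVertexDeletion H H' ∨ IsEdgeDeletion H H' ∨ IsForwardContraction H H' ∨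
  IsBackwardContraction H H' ∨ IsEdgeCutting H H' ∨ IsSourceSeparation H H' ∨
  IsRangeDecomposition H H'

/-- `IsMinor H' H` : the hypergraph `H'` is obtained from `H` by a finite
combination of minor operations (`H' ≤ H`). -/
def IsMinor (H' H : FinHypergraph) : Prop := Relation.ReflTransGen MinorStep H H'

/-! ### The four forbidden minors (up to labelling) -/

def IsHGamma1 (H : FinHypergraph) : Prop :=
  ∃ v₁ v₂ v₃ e f : ℕ, v₁ ≠ v₂ ∧ v₁ ≠ v₃ ∧ v₂ ≠ v₃ ∧ e ≠ f ∧
    H.V = {v₁, v₂, v₃} ∧ H.E = {e, f} ∧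
    H.s e = {v₁, v₂, v₃} ∧ H.s f = {v₁, v₂, v₃} ∧ H.r e = ∅ ∧ H.r f = ∅

def IsHGamma2 (H : FinHypergraph) : Prop :=
  ∃ v₁ v₂ e f g : ℕ, v₁ ≠ v₂ ∧ e ≠ f ∧ e ≠ g ∧ f ≠ g ∧
    H.V = {v₁, v₂} ∧ H.E = {e, f, g} ∧
    H.s e = {v₁, v₂} ∧ H.s f = {v₁, v₂} ∧ H.s g = {v₁, v₂} ∧
    H.r e = ∅ ∧ H.r f = ∅ ∧ H.r g = ∅

def IsHGamma3 (H : FinHypergraph) : Prop :=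
  ∃ v w e f : ℕ, v ≠ w ∧ e ≠ f ∧
    H.V = {v, w} ∧ H.E = {e, f} ∧
    H.s e = {v, w} ∧ H.s f = {v, w} ∧ H.r e = ∅ ∧ H.r f = {w}

def IsHGamma4 (H : FinHypergraph) : Prop :=
  ∃ v₁ v₂ w e f : ℕ, v₁ ≠ v₂ ∧ v₁ ≠ w ∧ v₂ ≠ w ∧ e ≠ f ∧
    H.V = {v₁, v₂, w} ∧ H.E = {e, f} ∧
    H.s e = {v₁, v₂} ∧ H.s f = {v₁, v₂} ∧ H.r e = {w} ∧ H.r f = {w}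

/-! ### Deletion of sets of vertices and edges -/

/-- Delete the vertices `SV` and edges `SE` (an edge whose source becomes
empty is removed as well). -/
def deleteSet (H : FinHypergraph) (SV SE : Finset ℕ) : FinHypergraph where
  V := H.V \ SV
  E := (H.E \ SE).filter (fun e => ¬ H.s e ⊆ SV)
  r := fun e => H.r e \ SV
  s := fun e => H.s e \ SV

/-- Delete a single vertex. -/
def deleteVertex (H : FinHypergraph) (v : ℕ) : FinHypergraph where
  V := H.V.erase v
  E := H.E.filter (fun e => ¬ H.s e = {v})
  r := fun e => (H.r e).erase v
  s := fun e => (H.s e).erase v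

/-- Delete a single edge. -/
def deleteEdge (H : FinHypergraph) (f : ℕ) : FinHypergraph where
  V := H.V
  E := H.E.erase f
  r := H.r
  s := H.s

/-- Delete an item: `Sum.inl v` is a vertex, `Sum.inr f` is an edge. -/
def deleteItem (H : FinHypergraph) : ℕ ⊕ ℕ → FinHypergraph
  | Sum.inl v => H.deleteVertex v
  | Sum.inr f => H.deleteEdge f

/-- Delete the items of a list one at a time, from the left. -/
def deleteList (H : FinHypergraph) (l : List (ℕ ⊕ ℕ)) : FinHypergraph :=
  l.foldl deleteItem H

/-- Range decomposition applied simultaneously to all edges: an edge `e`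
with at least two vertices in its range is replaced by the edges
`Nat.pair e (v+1)` for `v ∈ r e`, with range `{v}` and source `s e`;
all other edges are kept (renamed `Nat.pair e 0`). -/
def rangeDecomposeAll (H : FinHypergraph) : FinHypergraph where
  V := H.V
  E := H.E.biUnion (fun e =>
    if (H.r e).card ≤ 1 then {Nat.pair e 0}
    else (H.r e).image (fun v => Nat.pair e (v + 1)))
  r := fun n => if n.unpair.2 = 0 then H.r n.unpair.1 else {n.unpair.2 - 1}
  s := fun n => H.s n.unpair.1

end FinHypergraph

/-! The edge set `F` of all edges with a path to `f₀` is closed under predecessors, so no edge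
outside `F` has a range vertex in a source of `F`. Conversely, every edge of `F` other than `f₀`
has a successor in `F`, and `f₀` has one by hypothesis, so a nonempty range of an edge of `F`
meets the sources of `F`. -/

namespace FinHypergraph

variable {H : FinHypergraph} {e f f₀ : ℕ}

theorem mem_easySet : e ∈ H.easySet f₀ ↔ e ∈ H.E ∧ H.PathTo e f₀ := by
  simp [easySet]

theorem PathTo.cons {g : ℕ} (he : e ∈ H.E) (hmeet : (H.r e ∩ H.s g).Nonempty)
    (hg : H.PathTo g f) : H.PathTo e f := by
  obtain ⟨l, ⟨-, hmem, hchain⟩, hhead, hlast⟩ := hg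
  cases l with
  | nil => simp at hhead
  | cons a t =>
    obtain rfl : a = g := by simpa using hhead
    refine ⟨e :: a :: t, ⟨List.cons_ne_nil _ _, ?_, List.isChain_cons_cons.mpr ⟨hmeet, hchain⟩⟩,
      rfl, by rwa [List.getLast?_cons_cons]⟩
    simpa [he] using hmem

theorem PathTo.eq_or_exists_step (h : H.PathTo e f) :
    e = f ∨ ∃ g ∈ H.E, (H.r e ∩ H.s g).Nonempty ∧ H.PathTo g f := by
  obtain ⟨l, ⟨-, hmem, hchain⟩, hhead, hlast⟩ := h
  match l, hhead with
  | [_], rfl => exact Or.inl (by simpa using hlast)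
  | _ :: g :: t, rfl =>
    obtain ⟨hmeet, hchain⟩ := List.isChain_cons_cons.mp hchain
    refine Or.inr ⟨g, hmem g (by simp), hmeet, g :: t,
      ⟨List.cons_ne_nil _ _, fun x hx => hmem x (List.mem_cons_of_mem _ hx), hchain⟩, rfl, ?_⟩
    rwa [List.getLast?_cons_cons] at hlast

theorem mem_easySet_of_inter_source {g : ℕ} (he : e ∈ H.E) (hg : g ∈ H.easySet f₀)
    (hmeet : (H.r e ∩ H.s g).Nonempty) : e ∈ H.easySet f₀ :=
  mem_easySet.mpr ⟨he, (mem_easySet.mp hg).2.cons he hmeet⟩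

theorem range_disjoint_easySources_of_notMem (he : e ∈ H.E) (heF : e ∉ H.easySet f₀) :
    Disjoint (H.r e) ((H.easySet f₀).biUnion H.s) := by
  refine Finset.disjoint_left.mpr fun v hv hvF => heF ?_
  obtain ⟨g, hg, hvg⟩ := Finset.mem_biUnion.mp hvF
  exact mem_easySet_of_inter_source he hg ⟨v, Finset.mem_inter.mpr ⟨hv, hvg⟩⟩

theorem range_inter_easySources_nonempty (hstar : ∃ f ∈ H.easySet f₀, H.r f₀ = H.s f)
    (he : e ∈ H.easySet f₀) (hr : (H.r e).Nonempty) :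
    (H.r e ∩ (H.easySet f₀).biUnion H.s).Nonempty := by
  rcases (mem_easySet.mp he).2.eq_or_exists_step with rfl | ⟨g, hgE, ⟨v, hv⟩, hg⟩
  · obtain ⟨f, hf, hrf⟩ := hstar
    obtain ⟨v, hv⟩ := hr
    exact ⟨v, Finset.mem_inter.mpr ⟨hv, Finset.mem_biUnion.mpr ⟨f, hf, hrf ▸ hv⟩⟩⟩
  · obtain ⟨hvr, hvs⟩ := Finset.mem_inter.mp hv
    exact ⟨v, Finset.mem_inter.mpr
      ⟨hvr, Finset.mem_biUnion.mpr ⟨g, mem_easySet.mpr ⟨hgE, hg⟩, hvs⟩⟩⟩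

end FinHypergraph

open FinHypergraph in
theorem easyEdgeSet_complement_ideallyClosed_general (H : FinHypergraph) (hWF : H.WF)
    (f₀ : ℕ)
    (hstar : ∃ f ∈ H.easySet f₀, H.r f₀ = H.s f) :
    H.IdeallyClosed (H.V \ (H.easySet f₀).biUnion H.s)
      (H.E \ H.easySet f₀) := by
  refine ⟨Finset.sdiff_subset, Finset.sdiff_subset, ?_, ?_, ?_⟩
  · intro e he
    obtain ⟨heE, heF⟩ := Finset.mem_sdiff.mp he
    exact Finset.subset_sdiff.mpr
      ⟨(hWF e heE).2.1, range_disjoint_easySources_of_notMem heE heF⟩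
  · intro e heE hcond
    refine Finset.mem_sdiff.mpr ⟨heE, fun heF => ?_⟩
    rcases hcond with hs | ⟨hr, hrS⟩
    · obtain ⟨v, hv⟩ := (hWF e heE).2.2
      exact (Finset.mem_sdiff.mp (hs hv)).2 (Finset.mem_biUnion.mpr ⟨e, heF, hv⟩)
    · obtain ⟨v, hv⟩ := range_inter_easySources_nonempty hstar heF hr
      obtain ⟨hvr, hvF⟩ := Finset.mem_inter.mp hv
      exact (Finset.mem_sdiff.mp (hrS hvr)).2 hvF
  · intro v hvV _ hall
    refine Finset.mem_sdiff.mpr ⟨hvV, fun hvF => ?_⟩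
    obtain ⟨f, hf, hvf⟩ := Finset.mem_biUnion.mp hvF
    exact (Finset.mem_sdiff.mp (hall f (mem_easySet.mp hf).1 hvf)).2 hf

open FinHypergraph in
/-- Let `f₀` be an easy edge of `H` generating the easy edge set `F`.
If the range of `f₀` equals the source of some edge of `F`, then the set
`S` consisting of all edges not in `F` together with all vertices not in
the source of any edge of `F` is ideally closed. -/
theorem easyEdgeSet_complement_ideallyClosed (H : FinHypergraph) (hWF : H.WF)
    (f₀ : ℕ) (hEasy : H.IsEasyEdge f₀)
    (hstar : ∃ f ∈ H.easySet f₀, H.r f₀ = H.s f) :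
    H.IdeallyClosed (H.V \ (H.easySet f₀).biUnion H.s)
      (H.E \ H.easySet f₀) :=
  easyEdgeSet_complement_ideallyClosed_general H hWF f₀ hstar
end

section
/- Let HΓ be a finite hypergraph containing an easy cycle μ = f_1…f_n with r(f_i) = {w_i}. Then the set S = (E^0 ∪ E^1) \ {f_1,…,f_n, w_1,…,w_n} is ideally closed. -/
/-! Basic notions of (finite, directed) hypergraphs, following
Trieb–Weber-style hypergraph C*-algebra combinatorics. Vertices and edges
are labelled by natural numbers. -/

structure NatHypergraph where
  V : Finset ℕ
  E : Finset ℕ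
  r : ℕ → Finset ℕ
  s : ℕ → Finset ℕ

namespace NatHypergraph

/-- Well-formedness: sources and ranges of edges consist of vertices,
and every edge has a nonempty source. -/
def WF (H : NatHypergraph) : Prop :=
  ∀ e ∈ H.E, H.s e ⊆ H.V ∧ H.r e ⊆ H.V ∧ (H.s e).Nonempty

/-- A vertex is a sink if no edge has it in its source. -/
def IsSink (H : NatHypergraph) (v : ℕ) : Prop := ∀ e ∈ H.E, v ∉ H.s e

/-- A path is a nonempty list of edges such that the range of each edge
meets the source of the next one. -/
def IsPath (H : NatHypergraph) (l : List ℕ) : Prop :=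
  l ≠ [] ∧ (∀ e ∈ l, e ∈ H.E) ∧
    List.Chain' (fun a b => (H.r a ∩ H.s b).Nonempty) l

/-- There is a path starting with edge `e` and ending with edge `f`. -/
def PathTo (H : NatHypergraph) (e f : ℕ) : Prop :=
  ∃ l : List ℕ, H.IsPath l ∧ l.head? = some e ∧ l.getLast? = some f

/-- The set of edges from which there is a path ending with `f₀`
(the "easy edge set" when `f₀` is easy). -/
noncomputable def easySet (H : NatHypergraph) (f₀ : ℕ) : Finset ℕ :=
  @Finset.filter ℕ (fun e => H.PathTo e f₀) (fun _ => Classical.propDecidable _) H.E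

/-- An edge `f₀` is easy if every edge from which there is a path to `f₀`
has exactly one vertex in its source and exactly one vertex in its range. -/
def IsEasyEdge (H : NatHypergraph) (f₀ : ℕ) : Prop :=
  f₀ ∈ H.E ∧ ∀ f ∈ H.easySet f₀, (H.s f).card = 1 ∧ (H.r f).card = 1

/-- An easy cycle of length `n`, given by edges `f 0, …, f (n-1)` and
range vertices `w 0, …, w (n-1)` (indices taken mod `n`). -/
def IsEasyCycle (H : NatHypergraph) (n : ℕ) (f w : ℕ → ℕ) : Prop :=
  0 < n ∧ (∀ i < n, f i ∈ H.E) ∧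
  (∀ i < n, (H.r (f i) ∩ H.s (f ((i + 1) % n))).Nonempty) ∧
  (∀ i < n, ∀ j < n, (H.r (f i) ∩ H.s (f j)).Nonempty → j = (i + 1) % n) ∧
  (∀ i < n, H.r (f i) = {w i}) ∧
  (∀ i < n, ∀ e ∈ H.E, w i ∈ H.r e → e = f i) ∧
  (∀ i < n, ∀ e ∈ H.E, w i ∈ H.s e → e = f ((i + 1) % n))

/-- A simple quasisink: at most one outgoing edge, which must have empty
range, and at most one incoming edge. -/
def IsSimpleQuasisink (H : NatHypergraph) (w : ℕ) : Prop :=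
  (∀ e ∈ H.E, ∀ f ∈ H.E, w ∈ H.s e → w ∈ H.s f → e = f) ∧
  (∀ e ∈ H.E, w ∈ H.s e → H.r e = ∅) ∧
  (∀ e ∈ H.E, ∀ f ∈ H.E, w ∈ H.r e → w ∈ H.r f → e = f)

/-- Normality of a hypergraph. -/
def Normal (H : NatHypergraph) : Prop :=
  (∀ e ∈ H.E, (H.r e).card ≤ 1) ∧
  (∀ e ∈ H.E,
    (∃ f ∈ H.E, f ≠ e ∧ (H.s e ∩ H.s f).Nonempty) ∨
    ((H.r e).Nonempty ∧ H.r e ⊆ H.s e)) ∧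
  (∀ e ∈ H.E, ∀ f ∈ H.E, e ≠ f → (H.s e ∩ H.s f).card = 1 →
    ((H.s e).card = 1 ∧ (H.s f).card = 1) ∨
    ∃ g ∈ H.E, g ≠ e ∧ (H.s e ∩ H.s f) ⊂ (H.s e ∩ H.s g))

/-- A reduced hypergraph: normal, no easy edge, no easy cycle, and no
edge ending in a simple quasisink. -/
def Reduced (H : NatHypergraph) : Prop :=
  H.Normal ∧ (¬∃ f₀, H.IsEasyEdge f₀) ∧ (¬∃ n f w, H.IsEasyCycle n f w) ∧
  ¬∃ f ∈ H.E, ∃ w, H.r f = {w} ∧ H.IsSimpleQuasisink w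

/-- A set of vertices `SV` and edges `SE` is ideally closed. -/
def IdeallyClosed (H : NatHypergraph) (SV SE : Finset ℕ) : Prop :=
  SV ⊆ H.V ∧ SE ⊆ H.E ∧
  (∀ e ∈ SE, H.r e ⊆ SV) ∧
  (∀ e ∈ H.E, (H.s e ⊆ SV ∨ ((H.r e).Nonempty ∧ H.r e ⊆ SV)) → e ∈ SE) ∧
  (∀ v ∈ H.V, ¬H.IsSink v → (∀ e ∈ H.E, v ∈ H.s e → e ∈ SE) → v ∈ SV)

/-! ### The seven minor operations, as relations -/

def IsVertexDeletion (H H' : NatHypergraph) : Prop :=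
  ∃ v ∈ H.V,
    H'.V = H.V.erase v ∧
    H'.E = H.E.filter (fun e => ¬ H.s e = {v}) ∧
    ∀ e ∈ H'.E, H'.r e = (H.r e).erase v ∧ H'.s e = (H.s e).erase v

def IsEdgeDeletion (H H' : NatHypergraph) : Prop :=
  ∃ f ∈ H.E,
    H'.V = H.V ∧ H'.E = H.E.erase f ∧
    ∀ e ∈ H'.E, H'.r e = H.r e ∧ H'.s e = H.s e

def IsForwardContraction (H H' : NatHypergraph) : Prop :=
  ∃ f ∈ H.E, ∃ w,
    H.s f = {w} ∧
    (∀ e ∈ H.E, e ≠ f → ¬(H.s e ∩ H.s f).Nonempty) ∧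
    (∀ e ∈ H.E, w ∈ H.r e → ¬(H.r e ∩ H.r f).Nonempty) ∧
    H'.V = H.V.erase w ∧ H'.E = H.E.erase f ∧
    ∀ e ∈ H'.E,
      H'.s e = H.s e ∧
      H'.r e = (if w ∈ H.r e then (H.r e).erase w ∪ H.r f else H.r e)

def IsBackwardContractionAt (H H' : NatHypergraph) (f : ℕ) : Prop :=
  f ∈ H.E ∧ ∃ w,
    H.r f = {w} ∧
    (∀ e ∈ H.E, e ≠ f → ¬(H.s e ∩ H.s f).Nonempty) ∧
    (∀ e ∈ H.E, (H.r e ∩ H.s f).Nonempty → w ∉ H.r e) ∧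
    H'.V = H.V.erase w ∧ H'.E = H.E.erase f ∧
    ∀ e ∈ H'.E,
      H'.r e = (if w ∈ H.r e then (H.r e).erase w ∪ H.s f else H.r e) ∧
      H'.s e = (if w ∈ H.s e then (H.s e).erase w ∪ H.s f else H.s e)

def IsBackwardContraction (H H' : NatHypergraph) : Prop :=
  ∃ f, IsBackwardContractionAt H H' f

def IsEdgeCutting (H H' : NatHypergraph) : Prop :=
  ∃ f ∈ H.E,
    H'.V = H.V ∧ H'.E = H.E ∧
    (∀ e ∈ H.E, H'.s e = H.s e) ∧
    (∀ e ∈ H.E, e ≠ f → H'.r e = H.r e) ∧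
    H'.r f = ∅

def IsSourceSeparation (H H' : NatHypergraph) : Prop :=
  ∃ (F : Finset ℕ) (w w' : ℕ),
    w ∈ H.V ∧ w' ∉ H.V ∧ F.Nonempty ∧
    F ⊂ H.E.filter (fun e => w ∈ H.s e) ∧
    H'.V = insert w' H.V ∧ H'.E = H.E ∧
    ∀ e ∈ H.E,
      H'.r e = (if w ∈ H.r e then insert w' (H.r e) else H.r e) ∧
      H'.s e = (if e ∈ F then insert w' ((H.s e).erase w) else H.s e)

def IsRangeDecomposition (H H' : NatHypergraph) : Prop :=
  ∃ f ∈ H.E, ∃ ι : ℕ → ℕ,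
    (H.r f).Nonempty ∧
    (∀ v ∈ H.r f, ι v ∉ H.E) ∧
    Set.InjOn ι (H.r f : Set ℕ) ∧
    H'.V = H.V ∧
    H'.E = H.E.erase f ∪ (H.r f).image ι ∧
    (∀ e ∈ H.E.erase f, H'.r e = H.r e ∧ H'.s e = H.s e) ∧
    (∀ v ∈ H.r f, H'.r (ι v) = {v} ∧ H'.s (ι v) = H.s f)

/-- One application of a minor operation. -/
def MinorStep (H H' : NatHypergraph) : Prop :=
  IsVertexDeletion H H' ∨ IsEdgeDeletion H H' ∨ IsForwardContraction H H' ∨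
  IsBackwardContraction H H' ∨ IsEdgeCutting H H' ∨ IsSourceSeparation H H' ∨
  IsRangeDecomposition H H'

/-- `IsMinor H' H` : the hypergraph `H'` is obtained from `H` by a finite
combination of minor operations (`H' ≤ H`). -/
def IsMinor (H' H : NatHypergraph) : Prop := Relation.ReflTransGen MinorStep H H'

/-! ### The four forbidden minors (up to labelling) -/

def IsHGamma1 (H : NatHypergraph) : Prop :=
  ∃ v₁ v₂ v₃ e f : ℕ, v₁ ≠ v₂ ∧ v₁ ≠ v₃ ∧ v₂ ≠ v₃ ∧ e ≠ f ∧
    H.V = {v₁, v₂, v₃} ∧ H.E = {e, f} ∧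
    H.s e = {v₁, v₂, v₃} ∧ H.s f = {v₁, v₂, v₃} ∧ H.r e = ∅ ∧ H.r f = ∅

def IsHGamma2 (H : NatHypergraph) : Prop :=
  ∃ v₁ v₂ e f g : ℕ, v₁ ≠ v₂ ∧ e ≠ f ∧ e ≠ g ∧ f ≠ g ∧
    H.V = {v₁, v₂} ∧ H.E = {e, f, g} ∧
    H.s e = {v₁, v₂} ∧ H.s f = {v₁, v₂} ∧ H.s g = {v₁, v₂} ∧
    H.r e = ∅ ∧ H.r f = ∅ ∧ H.r g = ∅

def IsHGamma3 (H : NatHypergraph) : Prop :=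
  ∃ v w e f : ℕ, v ≠ w ∧ e ≠ f ∧
    H.V = {v, w} ∧ H.E = {e, f} ∧
    H.s e = {v, w} ∧ H.s f = {v, w} ∧ H.r e = ∅ ∧ H.r f = {w}

def IsHGamma4 (H : NatHypergraph) : Prop :=
  ∃ v₁ v₂ w e f : ℕ, v₁ ≠ v₂ ∧ v₁ ≠ w ∧ v₂ ≠ w ∧ e ≠ f ∧
    H.V = {v₁, v₂, w} ∧ H.E = {e, f} ∧
    H.s e = {v₁, v₂} ∧ H.s f = {v₁, v₂} ∧ H.r e = {w} ∧ H.r f = {w}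

/-! ### Deletion of sets of vertices and edges -/

/-- Delete the vertices `SV` and edges `SE` (an edge whose source becomes
empty is removed as well). -/
def deleteSet (H : NatHypergraph) (SV SE : Finset ℕ) : NatHypergraph where
  V := H.V \ SV
  E := (H.E \ SE).filter (fun e => ¬ H.s e ⊆ SV)
  r := fun e => H.r e \ SV
  s := fun e => H.s e \ SV

/-- Delete a single vertex. -/
def deleteVertex (H : NatHypergraph) (v : ℕ) : NatHypergraph where
  V := H.V.erase v
  E := H.E.filter (fun e => ¬ H.s e = {v})
  r := fun e => (H.r e).erase v
  s := fun e => (H.s e).erase v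

/-- Delete a single edge. -/
def deleteEdge (H : NatHypergraph) (f : ℕ) : NatHypergraph where
  V := H.V
  E := H.E.erase f
  r := H.r
  s := H.s

/-- Delete an item: `Sum.inl v` is a vertex, `Sum.inr f` is an edge. -/
def deleteItem (H : NatHypergraph) : ℕ ⊕ ℕ → NatHypergraph
  | Sum.inl v => H.deleteVertex v
  | Sum.inr f => H.deleteEdge f

/-- Delete the items of a list one at a time, from the left. -/
def deleteList (H : NatHypergraph) (l : List (ℕ ⊕ ℕ)) : NatHypergraph :=
  l.foldl deleteItem H

/-- Range decomposition applied simultaneously to all edges: an edge `e`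
with at least two vertices in its range is replaced by the edges
`Nat.pair e (v+1)` for `v ∈ r e`, with range `{v}` and source `s e`;
all other edges are kept (renamed `Nat.pair e 0`). -/
def rangeDecomposeAll (H : NatHypergraph) : NatHypergraph where
  V := H.V
  E := H.E.biUnion (fun e =>
    if (H.r e).card ≤ 1 then {Nat.pair e 0}
    else (H.r e).image (fun v => Nat.pair e (v + 1)))
  r := fun n => if n.unpair.2 = 0 then H.r n.unpair.1 else {n.unpair.2 - 1}
  s := fun n => H.s n.unpair.1

end NatHypergraph

theorem Nat.exists_lt_add_one_mod_eq {n j : ℕ} (hj : j < n) : ∃ i < n, (i + 1) % n = j := by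
  rcases j with _ | j
  · exact ⟨n - 1, by omega, by rw [Nat.sub_add_cancel (by omega), Nat.mod_self]⟩
  · exact ⟨j, by omega, Nat.mod_eq_of_lt hj⟩

namespace NatHypergraph.IsEasyCycle

open Finset

variable {H : NatHypergraph} {n : ℕ} {f w : ℕ → ℕ}

theorem range_eq (hc : H.IsEasyCycle n f w) {i : ℕ} (hi : i < n) : H.r (f i) = {w i} :=
  hc.2.2.2.2.1 i hi

theorem mem_source_succ (hc : H.IsEasyCycle n f w) {i : ℕ} (hi : i < n) :
    w i ∈ H.s (f ((i + 1) % n)) := by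
  obtain ⟨x, hx⟩ := hc.2.2.1 i hi
  rw [mem_inter, hc.range_eq hi, mem_singleton] at hx
  exact hx.1 ▸ hx.2

theorem mem_edges_of_mem_range (hc : H.IsEasyCycle n f w) {e v : ℕ} (he : e ∈ H.E)
    (hv : v ∈ H.r e) (hvw : v ∈ (range n).image w) : e ∈ (range n).image f := by
  obtain ⟨i, hi, rfl⟩ := mem_image.mp hvw
  exact mem_image.mpr ⟨i, hi, (hc.2.2.2.2.2.1 i (mem_range.mp hi) e he hv).symm⟩

theorem exists_mem_source_of_mem_edges (hc : H.IsEasyCycle n f w) {e : ℕ}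
    (he : e ∈ (range n).image f) : ∃ v ∈ H.s e, v ∈ (range n).image w := by
  obtain ⟨j, hj, rfl⟩ := mem_image.mp he
  obtain ⟨i, hi, rfl⟩ := Nat.exists_lt_add_one_mod_eq (mem_range.mp hj)
  exact ⟨w i, hc.mem_source_succ hi, mem_image_of_mem w (mem_range.mpr hi)⟩

theorem exists_mem_range_of_mem_edges (hc : H.IsEasyCycle n f w) {e : ℕ}
    (he : e ∈ (range n).image f) : ∃ v ∈ H.r e, v ∈ (range n).image w := by
  obtain ⟨j, hj, rfl⟩ := mem_image.mp he
  rw [hc.range_eq (mem_range.mp hj)]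
  exact ⟨w j, mem_singleton_self _, mem_image_of_mem w hj⟩

theorem exists_source_mem_edges_of_mem_vertices (hc : H.IsEasyCycle n f w) {v : ℕ}
    (hv : v ∈ (range n).image w) : ∃ e ∈ H.E, v ∈ H.s e ∧ e ∈ (range n).image f := by
  obtain ⟨i, hi, rfl⟩ := mem_image.mp hv
  have hsucc : (i + 1) % n < n := Nat.mod_lt _ hc.1
  exact ⟨_, hc.2.1 _ hsucc, hc.mem_source_succ (mem_range.mp hi),
    mem_image_of_mem f (mem_range.mpr hsucc)⟩

end NatHypergraph.IsEasyCycle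

open NatHypergraph in
/-- If `f 0 … f (n-1)` is an easy cycle with range vertices `w i`, then
the set `S = (E⁰ ∪ E¹) \ {f 0,…,f (n-1), w 0,…,w (n-1)}` is ideally
closed. -/
theorem easyCycle_complement_ideallyClosed (H : NatHypergraph) (hWF : H.WF)
    (n : ℕ) (f w : ℕ → ℕ) (hcyc : H.IsEasyCycle n f w) :
    H.IdeallyClosed (H.V \ (Finset.range n).image w)
      (H.E \ (Finset.range n).image f) := by
  refine ⟨Finset.sdiff_subset, Finset.sdiff_subset, ?_, ?_, ?_⟩
  · intro e he v hv
    obtain ⟨heE, hef⟩ := Finset.mem_sdiff.mp he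
    exact Finset.mem_sdiff.mpr
      ⟨(hWF e heE).2.1 hv, fun hvw => hef (hcyc.mem_edges_of_mem_range heE hv hvw)⟩
  · intro e he hsub
    refine Finset.mem_sdiff.mpr ⟨he, fun hef => ?_⟩
    rcases hsub with hs | ⟨-, hr⟩
    · obtain ⟨v, hv, hvw⟩ := hcyc.exists_mem_source_of_mem_edges hef
      exact (Finset.mem_sdiff.mp (hs hv)).2 hvw
    · obtain ⟨v, hv, hvw⟩ := hcyc.exists_mem_range_of_mem_edges hef
      exact (Finset.mem_sdiff.mp (hr hv)).2 hvw
  · intro v hv _ hout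
    refine Finset.mem_sdiff.mpr ⟨hv, fun hvw => ?_⟩
    obtain ⟨e, he, hve, hef⟩ := hcyc.exists_source_mem_edges_of_mem_vertices hvw
    exact (Finset.mem_sdiff.mp (hout e he hve)).2 hef
end

section
/- Let HΓ be a normal finite hypergraph that contains no easy edge. Then for every edge e with nonempty range, either |s(e)| > 1, or there exist edges e_1,…,e_n with n ≥ 2 and e_n = e such that e_1…e_n is a path in HΓ and |s(e_1)| > 1 while |s(e_i)| = 1 for all 2 ≤ i ≤ n. -/
/-! Basic notions of (finite, directed) hypergraphs, following
Trieb–Weber-style hypergraph C*-algebra combinatorics. Vertices and edges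
are labelled by natural numbers. -/

structure HypergraphTW where
  V : Finset ℕ
  E : Finset ℕ
  r : ℕ → Finset ℕ
  s : ℕ → Finset ℕ

namespace HypergraphTW

/-- Well-formedness: sources and ranges of edges consist of vertices,
and every edge has a nonempty source. -/
def WF (H : HypergraphTW) : Prop :=
  ∀ e ∈ H.E, H.s e ⊆ H.V ∧ H.r e ⊆ H.V ∧ (H.s e).Nonempty

/-- A vertex is a sink if no edge has it in its source. -/
def IsSink (H : HypergraphTW) (v : ℕ) : Prop := ∀ e ∈ H.E, v ∉ H.s e

/-- A path is a nonempty list of edges such that the range of each edge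
meets the source of the next one. -/
def IsPath (H : HypergraphTW) (l : List ℕ) : Prop :=
  l ≠ [] ∧ (∀ e ∈ l, e ∈ H.E) ∧
    List.Chain' (fun a b => (H.r a ∩ H.s b).Nonempty) l

/-- There is a path starting with edge `e` and ending with edge `f`. -/
def PathTo (H : HypergraphTW) (e f : ℕ) : Prop :=
  ∃ l : List ℕ, H.IsPath l ∧ l.head? = some e ∧ l.getLast? = some f

/-- The set of edges from which there is a path ending with `f₀`
(the "easy edge set" when `f₀` is easy). -/
noncomputable def easySet (H : HypergraphTW) (f₀ : ℕ) : Finset ℕ :=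
  @Finset.filter ℕ (fun e => H.PathTo e f₀) (fun _ => Classical.propDecidable _) H.E

/-- An edge `f₀` is easy if every edge from which there is a path to `f₀`
has exactly one vertex in its source and exactly one vertex in its range. -/
def IsEasyEdge (H : HypergraphTW) (f₀ : ℕ) : Prop :=
  f₀ ∈ H.E ∧ ∀ f ∈ H.easySet f₀, (H.s f).card = 1 ∧ (H.r f).card = 1

/-- An easy cycle of length `n`, given by edges `f 0, …, f (n-1)` and
range vertices `w 0, …, w (n-1)` (indices taken mod `n`). -/
def IsEasyCycle (H : HypergraphTW) (n : ℕ) (f w : ℕ → ℕ) : Prop :=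
  0 < n ∧ (∀ i < n, f i ∈ H.E) ∧
  (∀ i < n, (H.r (f i) ∩ H.s (f ((i + 1) % n))).Nonempty) ∧
  (∀ i < n, ∀ j < n, (H.r (f i) ∩ H.s (f j)).Nonempty → j = (i + 1) % n) ∧
  (∀ i < n, H.r (f i) = {w i}) ∧
  (∀ i < n, ∀ e ∈ H.E, w i ∈ H.r e → e = f i) ∧
  (∀ i < n, ∀ e ∈ H.E, w i ∈ H.s e → e = f ((i + 1) % n))

/-- A simple quasisink: at most one outgoing edge, which must have empty
range, and at most one incoming edge. -/
def IsSimpleQuasisink (H : HypergraphTW) (w : ℕ) : Prop :=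
  (∀ e ∈ H.E, ∀ f ∈ H.E, w ∈ H.s e → w ∈ H.s f → e = f) ∧
  (∀ e ∈ H.E, w ∈ H.s e → H.r e = ∅) ∧
  (∀ e ∈ H.E, ∀ f ∈ H.E, w ∈ H.r e → w ∈ H.r f → e = f)

/-- Normality of a hypergraph. -/
def Normal (H : HypergraphTW) : Prop :=
  (∀ e ∈ H.E, (H.r e).card ≤ 1) ∧
  (∀ e ∈ H.E,
    (∃ f ∈ H.E, f ≠ e ∧ (H.s e ∩ H.s f).Nonempty) ∨
    ((H.r e).Nonempty ∧ H.r e ⊆ H.s e)) ∧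
  (∀ e ∈ H.E, ∀ f ∈ H.E, e ≠ f → (H.s e ∩ H.s f).card = 1 →
    ((H.s e).card = 1 ∧ (H.s f).card = 1) ∨
    ∃ g ∈ H.E, g ≠ e ∧ (H.s e ∩ H.s f) ⊂ (H.s e ∩ H.s g))

/-- A reduced hypergraph: normal, no easy edge, no easy cycle, and no
edge ending in a simple quasisink. -/
def Reduced (H : HypergraphTW) : Prop :=
  H.Normal ∧ (¬∃ f₀, H.IsEasyEdge f₀) ∧ (¬∃ n f w, H.IsEasyCycle n f w) ∧
  ¬∃ f ∈ H.E, ∃ w, H.r f = {w} ∧ H.IsSimpleQuasisink w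

/-- A set of vertices `SV` and edges `SE` is ideally closed. -/
def IdeallyClosed (H : HypergraphTW) (SV SE : Finset ℕ) : Prop :=
  SV ⊆ H.V ∧ SE ⊆ H.E ∧
  (∀ e ∈ SE, H.r e ⊆ SV) ∧
  (∀ e ∈ H.E, (H.s e ⊆ SV ∨ ((H.r e).Nonempty ∧ H.r e ⊆ SV)) → e ∈ SE) ∧
  (∀ v ∈ H.V, ¬H.IsSink v → (∀ e ∈ H.E, v ∈ H.s e → e ∈ SE) → v ∈ SV)

/-! ### The seven minor operations, as relations -/

def IsVertexDeletion (H H' : HypergraphTW) : Prop :=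
  ∃ v ∈ H.V,
    H'.V = H.V.erase v ∧
    H'.E = H.E.filter (fun e => ¬ H.s e = {v}) ∧
    ∀ e ∈ H'.E, H'.r e = (H.r e).erase v ∧ H'.s e = (H.s e).erase v

def IsEdgeDeletion (H H' : HypergraphTW) : Prop :=
  ∃ f ∈ H.E,
    H'.V = H.V ∧ H'.E = H.E.erase f ∧
    ∀ e ∈ H'.E, H'.r e = H.r e ∧ H'.s e = H.s e

def IsForwardContraction (H H' : HypergraphTW) : Prop :=
  ∃ f ∈ H.E, ∃ w,
    H.s f = {w} ∧
    (∀ e ∈ H.E, e ≠ f → ¬(H.s e ∩ H.s f).Nonempty) ∧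
    (∀ e ∈ H.E, w ∈ H.r e → ¬(H.r e ∩ H.r f).Nonempty) ∧
    H'.V = H.V.erase w ∧ H'.E = H.E.erase f ∧
    ∀ e ∈ H'.E,
      H'.s e = H.s e ∧
      H'.r e = (if w ∈ H.r e then (H.r e).erase w ∪ H.r f else H.r e)

def IsBackwardContractionAt (H H' : HypergraphTW) (f : ℕ) : Prop :=
  f ∈ H.E ∧ ∃ w,
    H.r f = {w} ∧
    (∀ e ∈ H.E, e ≠ f → ¬(H.s e ∩ H.s f).Nonempty) ∧
    (∀ e ∈ H.E, (H.r e ∩ H.s f).Nonempty → w ∉ H.r e) ∧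
    H'.V = H.V.erase w ∧ H'.E = H.E.erase f ∧
    ∀ e ∈ H'.E,
      H'.r e = (if w ∈ H.r e then (H.r e).erase w ∪ H.s f else H.r e) ∧
      H'.s e = (if w ∈ H.s e then (H.s e).erase w ∪ H.s f else H.s e)

def IsBackwardContraction (H H' : HypergraphTW) : Prop :=
  ∃ f, IsBackwardContractionAt H H' f

def IsEdgeCutting (H H' : HypergraphTW) : Prop :=
  ∃ f ∈ H.E,
    H'.V = H.V ∧ H'.E = H.E ∧
    (∀ e ∈ H.E, H'.s e = H.s e) ∧
    (∀ e ∈ H.E, e ≠ f → H'.r e = H.r e) ∧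
    H'.r f = ∅

def IsSourceSeparation (H H' : HypergraphTW) : Prop :=
  ∃ (F : Finset ℕ) (w w' : ℕ),
    w ∈ H.V ∧ w' ∉ H.V ∧ F.Nonempty ∧
    F ⊂ H.E.filter (fun e => w ∈ H.s e) ∧
    H'.V = insert w' H.V ∧ H'.E = H.E ∧
    ∀ e ∈ H.E,
      H'.r e = (if w ∈ H.r e then insert w' (H.r e) else H.r e) ∧
      H'.s e = (if e ∈ F then insert w' ((H.s e).erase w) else H.s e)

def IsRangeDecomposition (H H' : HypergraphTW) : Prop :=
  ∃ f ∈ H.E, ∃ ι : ℕ → ℕ,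
    (H.r f).Nonempty ∧
    (∀ v ∈ H.r f, ι v ∉ H.E) ∧
    Set.InjOn ι (H.r f : Set ℕ) ∧
    H'.V = H.V ∧
    H'.E = H.E.erase f ∪ (H.r f).image ι ∧
    (∀ e ∈ H.E.erase f, H'.r e = H.r e ∧ H'.s e = H.s e) ∧
    (∀ v ∈ H.r f, H'.r (ι v) = {v} ∧ H'.s (ι v) = H.s f)

/-- One application of a minor operation. -/
def MinorStep (H H' : HypergraphTW) : Prop :=
  IsVertexDeletion H H' ∨ IsEdgeDeletion H H' ∨ IsForwardContraction H H' ∨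
  IsBackwardContraction H H' ∨ IsEdgeCutting H H' ∨ IsSourceSeparation H H' ∨
  IsRangeDecomposition H H'

/-- `IsMinor H' H` : the hypergraph `H'` is obtained from `H` by a finite
combination of minor operations (`H' ≤ H`). -/
def IsMinor (H' H : HypergraphTW) : Prop := Relation.ReflTransGen MinorStep H H'

/-! ### The four forbidden minors (up to labelling) -/

def IsHGamma1 (H : HypergraphTW) : Prop :=
  ∃ v₁ v₂ v₃ e f : ℕ, v₁ ≠ v₂ ∧ v₁ ≠ v₃ ∧ v₂ ≠ v₃ ∧ e ≠ f ∧
    H.V = {v₁, v₂, v₃} ∧ H.E = {e, f} ∧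
    H.s e = {v₁, v₂, v₃} ∧ H.s f = {v₁, v₂, v₃} ∧ H.r e = ∅ ∧ H.r f = ∅

def IsHGamma2 (H : HypergraphTW) : Prop :=
  ∃ v₁ v₂ e f g : ℕ, v₁ ≠ v₂ ∧ e ≠ f ∧ e ≠ g ∧ f ≠ g ∧
    H.V = {v₁, v₂} ∧ H.E = {e, f, g} ∧
    H.s e = {v₁, v₂} ∧ H.s f = {v₁, v₂} ∧ H.s g = {v₁, v₂} ∧
    H.r e = ∅ ∧ H.r f = ∅ ∧ H.r g = ∅

def IsHGamma3 (H : HypergraphTW) : Prop :=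
  ∃ v w e f : ℕ, v ≠ w ∧ e ≠ f ∧
    H.V = {v, w} ∧ H.E = {e, f} ∧
    H.s e = {v, w} ∧ H.s f = {v, w} ∧ H.r e = ∅ ∧ H.r f = {w}

def IsHGamma4 (H : HypergraphTW) : Prop :=
  ∃ v₁ v₂ w e f : ℕ, v₁ ≠ v₂ ∧ v₁ ≠ w ∧ v₂ ≠ w ∧ e ≠ f ∧
    H.V = {v₁, v₂, w} ∧ H.E = {e, f} ∧
    H.s e = {v₁, v₂} ∧ H.s f = {v₁, v₂} ∧ H.r e = {w} ∧ H.r f = {w}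

/-! ### Deletion of sets of vertices and edges -/

/-- Delete the vertices `SV` and edges `SE` (an edge whose source becomes
empty is removed as well). -/
def deleteSet (H : HypergraphTW) (SV SE : Finset ℕ) : HypergraphTW where
  V := H.V \ SV
  E := (H.E \ SE).filter (fun e => ¬ H.s e ⊆ SV)
  r := fun e => H.r e \ SV
  s := fun e => H.s e \ SV

/-- Delete a single vertex. -/
def deleteVertex (H : HypergraphTW) (v : ℕ) : HypergraphTW where
  V := H.V.erase v
  E := H.E.filter (fun e => ¬ H.s e = {v})
  r := fun e => (H.r e).erase v
  s := fun e => (H.s e).erase v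

/-- Delete a single edge. -/
def deleteEdge (H : HypergraphTW) (f : ℕ) : HypergraphTW where
  V := H.V
  E := H.E.erase f
  r := H.r
  s := H.s

/-- Delete an item: `Sum.inl v` is a vertex, `Sum.inr f` is an edge. -/
def deleteItem (H : HypergraphTW) : ℕ ⊕ ℕ → HypergraphTW
  | Sum.inl v => H.deleteVertex v
  | Sum.inr f => H.deleteEdge f

/-- Delete the items of a list one at a time, from the left. -/
def deleteList (H : HypergraphTW) (l : List (ℕ ⊕ ℕ)) : HypergraphTW :=
  l.foldl deleteItem H

/-- Range decomposition applied simultaneously to all edges: an edge `e`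
with at least two vertices in its range is replaced by the edges
`Nat.pair e (v+1)` for `v ∈ r e`, with range `{v}` and source `s e`;
all other edges are kept (renamed `Nat.pair e 0`). -/
def rangeDecomposeAll (H : HypergraphTW) : HypergraphTW where
  V := H.V
  E := H.E.biUnion (fun e =>
    if (H.r e).card ≤ 1 then {Nat.pair e 0}
    else (H.r e).image (fun v => Nat.pair e (v + 1)))
  r := fun n => if n.unpair.2 = 0 then H.r n.unpair.1 else {n.unpair.2 - 1}
  s := fun n => H.s n.unpair.1

end HypergraphTW

/-!
If `e` is not easy, it has a predecessor `f` (possibly itself) violating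
`|s f| = |r f| = 1`. Normality gives `|s f| ≥ 1` and `|r f| ≤ 1`, and `r f ≠ ∅`
since a path continues from `f` (or `f = e` has nonempty range); hence `|s f| > 1`.
On a path from `f` to `e`, the last edge with more than one source vertex then
starts the required path: all later edges have a nonempty source, being entered
through the range of their predecessor.
-/

namespace HypergraphTW

variable {H : HypergraphTW}

theorem Normal.source_nonempty (hN : H.Normal) {e : ℕ} (he : e ∈ H.E) :
    (H.s e).Nonempty := by
  by_contra hs
  rw [Finset.not_nonempty_iff_eq_empty] at hs
  rcases hN.2.1 e he with ⟨f, -, -, hef⟩ | ⟨hr, hrs⟩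
  · simp [hs] at hef
  · exact hr.ne_empty (Finset.subset_empty.1 (hs ▸ hrs))

theorem Normal.range_eq_empty_of_card_ne_one (hN : H.Normal) {e : ℕ} (he : e ∈ H.E)
    (hr : (H.r e).card ≠ 1) : H.r e = ∅ :=
  Finset.card_eq_zero.1 (by have := hN.1 e he; omega)

theorem IsPath.tail {a : ℕ} {t : List ℕ} (hl : H.IsPath (a :: t)) (ht : t ≠ []) :
    H.IsPath t :=
  ⟨ht, fun g hg => hl.2.1 g (List.mem_cons_of_mem a hg), hl.2.2.tail⟩

theorem IsPath.eq_nil_of_range_eq_empty {a : ℕ} {t : List ℕ} (hl : H.IsPath (a :: t))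
    (ha : H.r a = ∅) : t = [] := by
  rcases t with _ | ⟨b, t⟩
  · rfl
  · obtain ⟨v, hv⟩ := (List.isChain_cons_cons.1 hl.2.2).1
    simp [ha] at hv

theorem IsPath.source_nonempty_of_mem_tail {a g : ℕ} {t : List ℕ} (hl : H.IsPath (a :: t))
    (hg : g ∈ t) : (H.s g).Nonempty := by
  induction t generalizing a with
  | nil => simp at hg
  | cons b t ih =>
    rcases List.mem_cons.1 hg with rfl | hg
    · exact (List.isChain_cons_cons.1 hl.2.2).1.mono Finset.inter_subset_right
    · exact ih (hl.tail (List.cons_ne_nil b t)) hg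

theorem IsPath.one_lt_card_source_or_exists_light_suffix {e : ℕ} {l : List ℕ}
    (hl : H.IsPath l) (hlast : l.getLast? = some e) (hheavy : ∃ g ∈ l, 1 < (H.s g).card) :
    1 < (H.s e).card ∨
      ∃ (e₁ : ℕ) (l' : List ℕ), l' ≠ [] ∧ H.IsPath (e₁ :: l') ∧
        (e₁ :: l').getLast (List.cons_ne_nil _ _) = e ∧
        1 < (H.s e₁).card ∧ ∀ g ∈ l', (H.s g).card = 1 := by
  induction l with
  | nil => simp at hlast
  | cons a t ih =>
    rcases t with _ | ⟨b, t⟩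
    · obtain rfl : a = e := by simpa using hlast
      exact Or.inl (by simpa using hheavy)
    by_cases htail : ∃ g ∈ b :: t, 1 < (H.s g).card
    · exact ih (hl.tail (List.cons_ne_nil b t)) (by simpa using hlast) htail
    push Not at htail
    have ha : 1 < (H.s a).card := by
      obtain ⟨g, hg, hcard⟩ := hheavy
      rcases List.mem_cons.1 hg with rfl | hg
      · exact hcard
      · exact absurd hcard (htail g hg).not_gt
    refine Or.inr ⟨a, b :: t, List.cons_ne_nil b t, hl, ?_, ha, fun g hg => ?_⟩
    · simpa [List.getLast?_eq_some_getLast] using hlast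
    · have := (hl.source_nonempty_of_mem_tail hg).card_pos
      have := htail g hg
      omega

end HypergraphTW

open HypergraphTW in
theorem normal_no_easy_edge_path_structure_general (H : HypergraphTW)
    (hN : H.Normal) (hne : ¬∃ f₀, H.IsEasyEdge f₀) :
    ∀ e ∈ H.E, (H.r e).Nonempty →
      1 < (H.s e).card ∨
      ∃ (e₁ : ℕ) (l : List ℕ), l ≠ [] ∧ H.IsPath (e₁ :: l) ∧
        (e₁ :: l).getLast (List.cons_ne_nil _ _) = e ∧
        1 < (H.s e₁).card ∧ ∀ g ∈ l, (H.s g).card = 1 := by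
  intro e he hre
  obtain ⟨f, hf, hbad⟩ : ∃ f ∈ H.easySet e, ¬((H.s f).card = 1 ∧ (H.r f).card = 1) := by
    by_contra! h
    exact hne ⟨e, he, h⟩
  simp only [easySet, Finset.mem_filter] at hf
  obtain ⟨hfE, l, hl, hhead, hlast⟩ := hf
  obtain ⟨t, rfl⟩ : ∃ t, l = f :: t := by
    obtain ⟨a, t, rfl⟩ := List.exists_cons_of_ne_nil hl.1
    exact ⟨t, by simpa using hhead⟩
  have hf_heavy : 1 < (H.s f).card := by
    by_contra hle
    have hs : (H.s f).card = 1 := by have := (hN.source_nonempty hfE).card_pos; omega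
    have hr := hN.range_eq_empty_of_card_ne_one hfE fun hr => hbad ⟨hs, hr⟩
    obtain rfl := hl.eq_nil_of_range_eq_empty hr
    obtain rfl : f = e := by simpa using hlast
    exact hre.ne_empty hr
  exact hl.one_lt_card_source_or_exists_light_suffix hlast ⟨f, List.mem_cons_self, hf_heavy⟩

open HypergraphTW in
/-- In a normal hypergraph with no easy edge, every edge `e` with nonempty
range either has at least two vertices in its source, or is the endpoint of
a path `e₁ … eₙ` (n ≥ 2, eₙ = e) with `|s e₁| > 1` and `|s eᵢ| = 1` for all
`i ≥ 2`. -/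
theorem normal_no_easy_edge_path_structure (H : HypergraphTW) (hWF : H.WF)
    (hN : H.Normal) (hne : ¬∃ f₀, H.IsEasyEdge f₀) :
    ∀ e ∈ H.E, (H.r e).Nonempty →
      1 < (H.s e).card ∨
      ∃ (e₁ : ℕ) (l : List ℕ), l ≠ [] ∧ H.IsPath (e₁ :: l) ∧
        (e₁ :: l).getLast (List.cons_ne_nil _ _) = e ∧
        1 < (H.s e₁).card ∧ ∀ g ∈ l, (H.s g).card = 1 :=
  normal_no_easy_edge_path_structure_general H hN hne
end

section
/- Let HΓ be a finite hypergraph, let e, f be distinct edges with |s(e) ∩ s(f)| = 1, say s(e) ∩ s(f) = {w}, such that (|s(e)| > 1 or |s(f)| > 1) and there is no edge g ≠ e with s(e) ∩ s(f) ⊊ s(e) ∩ s(g). Let HΓ' be obtained from HΓ by source separation of {e} at w (introducing a new vertex w', replacing w by w' in s(e), and adding w' to r(g) for every edge g with w ∈ r(g)). Then the set of 'bad pairs' of HΓ' is strictly contained in the set of bad pairs of HΓ, where a bad pair of a hypergraph is an ordered pair (a,b) of distinct edges with |s(a) ∩ s(b)| = 1, not both sources singletons, and no edge g ≠ a with s(a)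 ∩ s(b) ⊊ s(a) ∩ s(g). In particular the number of bad pairs strictly decreases. -/
namespace FinHypergraph

/-- The set of "bad pairs": ordered pairs of distinct edges violating
normality condition (3). -/
def badPairs (H : FinHypergraph) : Set (ℕ × ℕ) :=
  {p | p.1 ∈ H.E ∧ p.2 ∈ H.E ∧ p.1 ≠ p.2 ∧
    (H.s p.1 ∩ H.s p.2).card = 1 ∧
    ¬((H.s p.1).card = 1 ∧ (H.s p.2).card = 1) ∧
    ¬∃ g ∈ H.E, g ≠ p.1 ∧ (H.s p.1 ∩ H.s p.2) ⊂ (H.s p.1 ∩ H.s g)}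

end FinHypergraph

/-! Since `w'` is fresh, separating `s e` at `w` changes only the intersections `s e ∩ s g`, and
only by removing `w`. By the maximality of `s e ∩ s f = {w}`, an intersection `s e ∩ s g` that
contains `w` is exactly `{w}`, so each intersection either stays the same or becomes empty. Badness
of `(a, b)` depends only on the source sizes and the intersections `s a ∩ s g`, and an intersection
that became empty had at most one vertex, so it never strictly contains the singleton `s a ∩ s b`:
no new bad pair appears, while `(e, f)` stops being one. -/

namespace FinHypergraph

theorem badPairs_subset_prod (H : FinHypergraph) : H.badPairs ⊆ (H.E : Set ℕ) ×ˢ (H.E : Set ℕ) :=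
  fun _ hp => ⟨hp.1, hp.2.1⟩

theorem badPairs_finite (H : FinHypergraph) : H.badPairs.Finite :=
  (H.E.finite_toSet.prod H.E.finite_toSet).subset H.badPairs_subset_prod

theorem badPairs_subset_of_inter_eq_or_eq_empty {H H' : FinHypergraph} (hE : H'.E = H.E)
    (hcard : ∀ a ∈ H.E, (H'.s a).card = (H.s a).card)
    (hinter : ∀ a ∈ H.E, ∀ b ∈ H.E, a ≠ b → H'.s a ∩ H'.s b = H.s a ∩ H.s b ∨
      (H'.s a ∩ H'.s b = ∅ ∧ (H.s a ∩ H.s b).card ≤ 1)) :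
    H'.badPairs ⊆ H.badPairs := by
  rintro ⟨a, b⟩ ⟨ha, hb, hab, hab1, hnot1, hmax⟩
  dsimp only at hab hab1 hnot1 hmax
  rw [hE] at ha hb hmax
  have hI : H'.s a ∩ H'.s b = H.s a ∩ H.s b := by
    rcases hinter a ha b hb hab with h | ⟨h, -⟩
    · exact h
    · simp [h] at hab1
  refine ⟨ha, hb, hab, hI ▸ hab1, by rwa [← hcard a ha, ← hcard b hb], ?_⟩
  rintro ⟨g, hg, hga, hlt⟩
  rcases hinter a ha g hg hga.symm with h | ⟨-, hle⟩
  · exact hmax ⟨g, hg, hga, by rwa [h, hI]⟩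
  · have := (Finset.card_lt_card hlt).trans_le hle
    rw [← hI, hab1] at this
    omega

section SourceSeparation

variable {H H' : FinHypergraph} {e w w' : ℕ}
  (hs : ∀ g, H'.s g = if g = e then insert w' ((H.s g).erase w) else H.s g)
include hs

theorem inter_sourceSep_of_ne {a b : ℕ} (ha : a ≠ e) (hb : b ≠ e) :
    H'.s a ∩ H'.s b = H.s a ∩ H.s b := by
  rw [hs, hs, if_neg ha, if_neg hb]

theorem inter_sourceSep_left {g : ℕ} (hge : g ≠ e) (hw'g : w' ∉ H.s g) :
    H'.s e ∩ H'.s g = (H.s e ∩ H.s g).erase w := by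
  rw [hs, hs, if_pos rfl, if_neg hge, Finset.insert_inter_of_notMem hw'g, Finset.erase_inter]

theorem card_sourceSep (hw'e : w' ∉ H.s e) (hwe : w ∈ H.s e) (a : ℕ) :
    (H'.s a).card = (H.s a).card := by
  rw [hs]
  split_ifs with ha
  · subst ha
    rw [Finset.card_insert_of_notMem (fun h => hw'e (Finset.mem_of_mem_erase h)),
      Finset.card_erase_add_one hwe]
  · rfl

theorem inter_sourceSep_eq_or_eq_empty (hw's : ∀ g ∈ H.E, w' ∉ H.s g)
    (hsing : ∀ g ∈ H.E, g ≠ e → w ∈ H.s g → H.s e ∩ H.s g = {w})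
    {a b : ℕ} (ha : a ∈ H.E) (hb : b ∈ H.E) (hab : a ≠ b) :
    H'.s a ∩ H'.s b = H.s a ∩ H.s b ∨
      (H'.s a ∩ H'.s b = ∅ ∧ (H.s a ∩ H.s b).card ≤ 1) := by
  have key : ∀ g ∈ H.E, g ≠ e → H'.s e ∩ H'.s g = H.s e ∩ H.s g ∨
      (H'.s e ∩ H'.s g = ∅ ∧ (H.s e ∩ H.s g).card ≤ 1) := by
    intro g hg hge
    rw [inter_sourceSep_left hs hge (hw's g hg)]
    by_cases hwg : w ∈ H.s g
    · simp [hsing g hg hge hwg]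
    · exact .inl (Finset.erase_eq_of_notMem fun h => hwg (Finset.mem_inter.1 h).2)
  by_cases hae : a = e
  · subst hae
    exact key b hb (Ne.symm hab)
  by_cases hbe : b = e
  · subst hbe
    simpa only [Finset.inter_comm (H'.s a), Finset.inter_comm (H.s a)] using key a ha hae
  exact .inl (inter_sourceSep_of_ne hs hae hbe)

end SourceSeparation

end FinHypergraph

open FinHypergraph in
theorem sourceSeparation_badPairs_decrease_general (H : FinHypergraph) (hWF : H.WF)
    (e f w w' : ℕ) (he : e ∈ H.E) (hf : f ∈ H.E) (hef : e ≠ f)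
    (hw : H.s e ∩ H.s f = {w})
    (hcard : ¬((H.s e).card = 1 ∧ (H.s f).card = 1))
    (hng : ¬∃ g ∈ H.E, g ≠ e ∧ (H.s e ∩ H.s f) ⊂ (H.s e ∩ H.s g))
    (hw' : w' ∉ H.V)
    (H' : FinHypergraph)
    (hE : H'.E = H.E)
    (hs : ∀ g, H'.s g = if g = e then insert w' ((H.s g).erase w) else H.s g) :
    H'.badPairs ⊂ H.badPairs ∧ H'.badPairs.ncard < H.badPairs.ncard := by
  have hw's : ∀ g ∈ H.E, w' ∉ H.s g := fun g hg hw'g => hw' ((hWF g hg).1 hw'g)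
  have hwe : w ∈ H.s e := (Finset.mem_inter.1 (hw ▸ Finset.mem_singleton_self w)).1
  have hsing : ∀ g ∈ H.E, g ≠ e → w ∈ H.s g → H.s e ∩ H.s g = {w} := by
    intro g hg hge hwg
    have hle : H.s e ∩ H.s f ⊆ H.s e ∩ H.s g :=
      hw ▸ Finset.singleton_subset_iff.2 (Finset.mem_inter.2 ⟨hwe, hwg⟩)
    rw [← hw]
    exact (hle.eq_of_not_ssubset fun hlt => hng ⟨g, hg, hge, hlt⟩).symm
  have hsub : H'.badPairs ⊆ H.badPairs :=
    badPairs_subset_of_inter_eq_or_eq_empty hE (fun a _ => card_sourceSep hs (hw's e he) hwe a)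
      fun a ha b hb hab => inter_sourceSep_eq_or_eq_empty hs hw's hsing ha hb hab
  have hbad : (e, f) ∈ H.badPairs := ⟨he, hf, hef, by simp [hw], hcard, hng⟩
  have hgood : (e, f) ∉ H'.badPairs := fun ⟨_, _, _, hone, _⟩ => by
    simp [inter_sourceSep_left hs hef.symm (hw's f hf), hw] at hone
  have hlt : H'.badPairs ⊂ H.badPairs := (Set.ssubset_iff_of_subset hsub).2 ⟨_, hbad, hgood⟩
  exact ⟨hlt, Set.ncard_lt_ncard hlt H.badPairs_finite⟩

open FinHypergraph in
/-- Source separation of `{e}` at the unique vertex `w` of `s e ∩ s f`,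
for a bad pair `(e, f)`, strictly decreases the set of bad pairs, and in
particular their number. -/
theorem sourceSeparation_badPairs_decrease (H : FinHypergraph) (hWF : H.WF)
    (e f w w' : ℕ) (he : e ∈ H.E) (hf : f ∈ H.E) (hef : e ≠ f)
    (hw : H.s e ∩ H.s f = {w})
    (hcard : ¬((H.s e).card = 1 ∧ (H.s f).card = 1))
    (hng : ¬∃ g ∈ H.E, g ≠ e ∧ (H.s e ∩ H.s f) ⊂ (H.s e ∩ H.s g))
    (hw' : w' ∉ H.V)
    (H' : FinHypergraph)
    (hV : H'.V = insert w' H.V) (hE : H'.E = H.E)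
    (hr : ∀ g, H'.r g = if w ∈ H.r g then insert w' (H.r g) else H.r g)
    (hs : ∀ g, H'.s g = if g = e then insert w' ((H.s g).erase w) else H.s g) :
    H'.badPairs ⊂ H.badPairs ∧ H'.badPairs.ncard < H.badPairs.ncard :=
  sourceSeparation_badPairs_decrease_general H hWF e f w w' he hf hef hw hcard hng hw' H' hE hs
end

section
/- Let HΓ be a normal finite hypergraph and f_1…f_n a path with |s(f_i)| = 1 for all i ≥ 2. Then the hypergraph HΔ with the same vertices, edge set E^1(HΓ) \ {f_2,…,f_n}, unchanged sources, and ranges given by r_HΔ(e) = r_HΓ(e) for e ≠ f_1 and r_HΔ(f_1) = r_HΓ(f_n), is a hypergraph minor of HΓ. -/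
/-! Basic notions of (finite, directed) hypergraphs, following
Trieb–Weber-style hypergraph C*-algebra combinatorics. Vertices and edges
are labelled by natural numbers. -/

structure HyperGraph where
  V : Finset ℕ
  E : Finset ℕ
  r : ℕ → Finset ℕ
  s : ℕ → Finset ℕ

namespace HyperGraph

/-- Well-formedness: sources and ranges of edges consist of vertices,
and every edge has a nonempty source. -/
def WF (H : HyperGraph) : Prop :=
  ∀ e ∈ H.E, H.s e ⊆ H.V ∧ H.r e ⊆ H.V ∧ (H.s e).Nonempty

/-- A vertex is a sink if no edge has it in its source. -/
def IsSink (H : HyperGraph) (v : ℕ) : Prop := ∀ e ∈ H.E, v ∉ H.s e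

/-- A path is a nonempty list of edges such that the range of each edge
meets the source of the next one. -/
def IsPath (H : HyperGraph) (l : List ℕ) : Prop :=
  l ≠ [] ∧ (∀ e ∈ l, e ∈ H.E) ∧
    List.Chain' (fun a b => (H.r a ∩ H.s b).Nonempty) l

/-- There is a path starting with edge `e` and ending with edge `f`. -/
def PathTo (H : HyperGraph) (e f : ℕ) : Prop :=
  ∃ l : List ℕ, H.IsPath l ∧ l.head? = some e ∧ l.getLast? = some f

/-- The set of edges from which there is a path ending with `f₀`
(the "easy edge set" when `f₀` is easy). -/
noncomputable def easySet (H : HyperGraph) (f₀ : ℕ) : Finset ℕ :=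
  @Finset.filter ℕ (fun e => H.PathTo e f₀) (fun _ => Classical.propDecidable _) H.E

/-- An edge `f₀` is easy if every edge from which there is a path to `f₀`
has exactly one vertex in its source and exactly one vertex in its range. -/
def IsEasyEdge (H : HyperGraph) (f₀ : ℕ) : Prop :=
  f₀ ∈ H.E ∧ ∀ f ∈ H.easySet f₀, (H.s f).card = 1 ∧ (H.r f).card = 1

/-- An easy cycle of length `n`, given by edges `f 0, …, f (n-1)` and
range vertices `w 0, …, w (n-1)` (indices taken mod `n`). -/
def IsEasyCycle (H : HyperGraph) (n : ℕ) (f w : ℕ → ℕ) : Prop :=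
  0 < n ∧ (∀ i < n, f i ∈ H.E) ∧
  (∀ i < n, (H.r (f i) ∩ H.s (f ((i + 1) % n))).Nonempty) ∧
  (∀ i < n, ∀ j < n, (H.r (f i) ∩ H.s (f j)).Nonempty → j = (i + 1) % n) ∧
  (∀ i < n, H.r (f i) = {w i}) ∧
  (∀ i < n, ∀ e ∈ H.E, w i ∈ H.r e → e = f i) ∧
  (∀ i < n, ∀ e ∈ H.E, w i ∈ H.s e → e = f ((i + 1) % n))

/-- A simple quasisink: at most one outgoing edge, which must have empty
range, and at most one incoming edge. -/
def IsSimpleQuasisink (H : HyperGraph) (w : ℕ) : Prop :=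
  (∀ e ∈ H.E, ∀ f ∈ H.E, w ∈ H.s e → w ∈ H.s f → e = f) ∧
  (∀ e ∈ H.E, w ∈ H.s e → H.r e = ∅) ∧
  (∀ e ∈ H.E, ∀ f ∈ H.E, w ∈ H.r e → w ∈ H.r f → e = f)

/-- Normality of a hypergraph. -/
def Normal (H : HyperGraph) : Prop :=
  (∀ e ∈ H.E, (H.r e).card ≤ 1) ∧
  (∀ e ∈ H.E,
    (∃ f ∈ H.E, f ≠ e ∧ (H.s e ∩ H.s f).Nonempty) ∨
    ((H.r e).Nonempty ∧ H.r e ⊆ H.s e)) ∧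
  (∀ e ∈ H.E, ∀ f ∈ H.E, e ≠ f → (H.s e ∩ H.s f).card = 1 →
    ((H.s e).card = 1 ∧ (H.s f).card = 1) ∨
    ∃ g ∈ H.E, g ≠ e ∧ (H.s e ∩ H.s f) ⊂ (H.s e ∩ H.s g))

/-- A reduced hypergraph: normal, no easy edge, no easy cycle, and no
edge ending in a simple quasisink. -/
def Reduced (H : HyperGraph) : Prop :=
  H.Normal ∧ (¬∃ f₀, H.IsEasyEdge f₀) ∧ (¬∃ n f w, H.IsEasyCycle n f w) ∧
  ¬∃ f ∈ H.E, ∃ w, H.r f = {w} ∧ H.IsSimpleQuasisink w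

/-- A set of vertices `SV` and edges `SE` is ideally closed. -/
def IdeallyClosed (H : HyperGraph) (SV SE : Finset ℕ) : Prop :=
  SV ⊆ H.V ∧ SE ⊆ H.E ∧
  (∀ e ∈ SE, H.r e ⊆ SV) ∧
  (∀ e ∈ H.E, (H.s e ⊆ SV ∨ ((H.r e).Nonempty ∧ H.r e ⊆ SV)) → e ∈ SE) ∧
  (∀ v ∈ H.V, ¬H.IsSink v → (∀ e ∈ H.E, v ∈ H.s e → e ∈ SE) → v ∈ SV)

/-! ### The seven minor operations, as relations -/

def IsVertexDeletion (H H' : HyperGraph) : Prop :=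
  ∃ v ∈ H.V,
    H'.V = H.V.erase v ∧
    H'.E = H.E.filter (fun e => ¬ H.s e = {v}) ∧
    ∀ e ∈ H'.E, H'.r e = (H.r e).erase v ∧ H'.s e = (H.s e).erase v

def IsEdgeDeletion (H H' : HyperGraph) : Prop :=
  ∃ f ∈ H.E,
    H'.V = H.V ∧ H'.E = H.E.erase f ∧
    ∀ e ∈ H'.E, H'.r e = H.r e ∧ H'.s e = H.s e

def IsForwardContraction (H H' : HyperGraph) : Prop :=
  ∃ f ∈ H.E, ∃ w,
    H.s f = {w} ∧
    (∀ e ∈ H.E, e ≠ f → ¬(H.s e ∩ H.s f).Nonempty) ∧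
    (∀ e ∈ H.E, w ∈ H.r e → ¬(H.r e ∩ H.r f).Nonempty) ∧
    H'.V = H.V.erase w ∧ H'.E = H.E.erase f ∧
    ∀ e ∈ H'.E,
      H'.s e = H.s e ∧
      H'.r e = (if w ∈ H.r e then (H.r e).erase w ∪ H.r f else H.r e)

def IsBackwardContractionAt (H H' : HyperGraph) (f : ℕ) : Prop :=
  f ∈ H.E ∧ ∃ w,
    H.r f = {w} ∧
    (∀ e ∈ H.E, e ≠ f → ¬(H.s e ∩ H.s f).Nonempty) ∧
    (∀ e ∈ H.E, (H.r e ∩ H.s f).Nonempty → w ∉ H.r e) ∧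
    H'.V = H.V.erase w ∧ H'.E = H.E.erase f ∧
    ∀ e ∈ H'.E,
      H'.r e = (if w ∈ H.r e then (H.r e).erase w ∪ H.s f else H.r e) ∧
      H'.s e = (if w ∈ H.s e then (H.s e).erase w ∪ H.s f else H.s e)

def IsBackwardContraction (H H' : HyperGraph) : Prop :=
  ∃ f, IsBackwardContractionAt H H' f

def IsEdgeCutting (H H' : HyperGraph) : Prop :=
  ∃ f ∈ H.E,
    H'.V = H.V ∧ H'.E = H.E ∧
    (∀ e ∈ H.E, H'.s e = H.s e) ∧
    (∀ e ∈ H.E, e ≠ f → H'.r e = H.r e) ∧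
    H'.r f = ∅

def IsSourceSeparation (H H' : HyperGraph) : Prop :=
  ∃ (F : Finset ℕ) (w w' : ℕ),
    w ∈ H.V ∧ w' ∉ H.V ∧ F.Nonempty ∧
    F ⊂ H.E.filter (fun e => w ∈ H.s e) ∧
    H'.V = insert w' H.V ∧ H'.E = H.E ∧
    ∀ e ∈ H.E,
      H'.r e = (if w ∈ H.r e then insert w' (H.r e) else H.r e) ∧
      H'.s e = (if e ∈ F then insert w' ((H.s e).erase w) else H.s e)

def IsRangeDecomposition (H H' : HyperGraph) : Prop :=
  ∃ f ∈ H.E, ∃ ι : ℕ → ℕ,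
    (H.r f).Nonempty ∧
    (∀ v ∈ H.r f, ι v ∉ H.E) ∧
    Set.InjOn ι (H.r f : Set ℕ) ∧
    H'.V = H.V ∧
    H'.E = H.E.erase f ∪ (H.r f).image ι ∧
    (∀ e ∈ H.E.erase f, H'.r e = H.r e ∧ H'.s e = H.s e) ∧
    (∀ v ∈ H.r f, H'.r (ι v) = {v} ∧ H'.s (ι v) = H.s f)

/-- One application of a minor operation. -/
def MinorStep (H H' : HyperGraph) : Prop :=
  IsVertexDeletion H H' ∨ IsEdgeDeletion H H' ∨ IsForwardContraction H H' ∨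
  IsBackwardContraction H H' ∨ IsEdgeCutting H H' ∨ IsSourceSeparation H H' ∨
  IsRangeDecomposition H H'

/-- `IsMinor H' H` : the hypergraph `H'` is obtained from `H` by a finite
combination of minor operations (`H' ≤ H`). -/
def IsMinor (H' H : HyperGraph) : Prop := Relation.ReflTransGen MinorStep H H'

/-! ### The four forbidden minors (up to labelling) -/

def IsHGamma1 (H : HyperGraph) : Prop :=
  ∃ v₁ v₂ v₃ e f : ℕ, v₁ ≠ v₂ ∧ v₁ ≠ v₃ ∧ v₂ ≠ v₃ ∧ e ≠ f ∧
    H.V = {v₁, v₂, v₃} ∧ H.E = {e, f} ∧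
    H.s e = {v₁, v₂, v₃} ∧ H.s f = {v₁, v₂, v₃} ∧ H.r e = ∅ ∧ H.r f = ∅

def IsHGamma2 (H : HyperGraph) : Prop :=
  ∃ v₁ v₂ e f g : ℕ, v₁ ≠ v₂ ∧ e ≠ f ∧ e ≠ g ∧ f ≠ g ∧
    H.V = {v₁, v₂} ∧ H.E = {e, f, g} ∧
    H.s e = {v₁, v₂} ∧ H.s f = {v₁, v₂} ∧ H.s g = {v₁, v₂} ∧
    H.r e = ∅ ∧ H.r f = ∅ ∧ H.r g = ∅

def IsHGamma3 (H : HyperGraph) : Prop :=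
  ∃ v w e f : ℕ, v ≠ w ∧ e ≠ f ∧
    H.V = {v, w} ∧ H.E = {e, f} ∧
    H.s e = {v, w} ∧ H.s f = {v, w} ∧ H.r e = ∅ ∧ H.r f = {w}

def IsHGamma4 (H : HyperGraph) : Prop :=
  ∃ v₁ v₂ w e f : ℕ, v₁ ≠ v₂ ∧ v₁ ≠ w ∧ v₂ ≠ w ∧ e ≠ f ∧
    H.V = {v₁, v₂, w} ∧ H.E = {e, f} ∧
    H.s e = {v₁, v₂} ∧ H.s f = {v₁, v₂} ∧ H.r e = {w} ∧ H.r f = {w}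

/-! ### Deletion of sets of vertices and edges -/

/-- Delete the vertices `SV` and edges `SE` (an edge whose source becomes
empty is removed as well). -/
def deleteSet (H : HyperGraph) (SV SE : Finset ℕ) : HyperGraph where
  V := H.V \ SV
  E := (H.E \ SE).filter (fun e => ¬ H.s e ⊆ SV)
  r := fun e => H.r e \ SV
  s := fun e => H.s e \ SV

/-- Delete a single vertex. -/
def deleteVertex (H : HyperGraph) (v : ℕ) : HyperGraph where
  V := H.V.erase v
  E := H.E.filter (fun e => ¬ H.s e = {v})
  r := fun e => (H.r e).erase v
  s := fun e => (H.s e).erase v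

/-- Delete a single edge. -/
def deleteEdge (H : HyperGraph) (f : ℕ) : HyperGraph where
  V := H.V
  E := H.E.erase f
  r := H.r
  s := H.s

/-- Delete an item: `Sum.inl v` is a vertex, `Sum.inr f` is an edge. -/
def deleteItem (H : HyperGraph) : ℕ ⊕ ℕ → HyperGraph
  | Sum.inl v => H.deleteVertex v
  | Sum.inr f => H.deleteEdge f

/-- Delete the items of a list one at a time, from the left. -/
def deleteList (H : HyperGraph) (l : List (ℕ ⊕ ℕ)) : HyperGraph :=
  l.foldl deleteItem H

/-- Range decomposition applied simultaneously to all edges: an edge `e`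
with at least two vertices in its range is replaced by the edges
`Nat.pair e (v+1)` for `v ∈ r e`, with range `{v}` and source `s e`;
all other edges are kept (renamed `Nat.pair e 0`). -/
def rangeDecomposeAll (H : HyperGraph) : HyperGraph where
  V := H.V
  E := H.E.biUnion (fun e =>
    if (H.r e).card ≤ 1 then {Nat.pair e 0}
    else (H.r e).image (fun v => Nat.pair e (v + 1)))
  r := fun n => if n.unpair.2 = 0 then H.r n.unpair.1 else {n.unpair.2 - 1}
  s := fun n => H.s n.unpair.1

end HyperGraph


/-! The edges of the path are contracted into `f₁` one at a time: `f₁` takes over the range of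
the next edge `g`, whose source is a single vertex `w ∈ r f₁`, and `g` is deleted. Normality
condition (2) says that `w` lies in `r g` or is the source of a second edge, which is what makes
this single step a minor. To keep that second edge alive during the later steps, the path is first
shortcut so that the sources of its tail are pairwise distinct; the skipped edges are deleted. -/

namespace HyperGraph

theorem IsMinor.refl (H : HyperGraph) : IsMinor H H := Relation.ReflTransGen.refl

theorem IsMinor.trans {H₁ H₂ H₃ : HyperGraph} (h₁₂ : IsMinor H₁ H₂) (h₂₃ : IsMinor H₂ H₃) :
    IsMinor H₁ H₃ :=
  Relation.ReflTransGen.trans h₂₃ h₁₂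

theorem MinorStep.isMinor {H H' : HyperGraph} (h : MinorStep H H') : IsMinor H' H :=
  Relation.ReflTransGen.single h

theorem isMinor_deleteEdge (H : HyperGraph) {f : ℕ} (hf : f ∈ H.E) :
    IsMinor (H.deleteEdge f) H :=
  MinorStep.isMinor (Or.inr (Or.inl ⟨f, hf, rfl, rfl, fun _ _ => ⟨rfl, rfl⟩⟩))

theorem isMinor_restrictEdges (H : HyperGraph) {E' : Finset ℕ} (hE : E' ⊆ H.E) :
    IsMinor { H with E := E' } H := by
  classical
  suffices ∀ S : Finset ℕ, IsMinor { H with E := H.E \ S } H by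
    simpa [Finset.sdiff_sdiff_eq_self hE] using this (H.E \ E')
  intro S
  induction S using Finset.induction_on with
  | empty => simpa using IsMinor.refl H
  | insert a S _ ih =>
    rw [Finset.sdiff_insert]
    by_cases ha : a ∈ H.E \ S
    · exact (isMinor_deleteEdge { H with E := H.E \ S } ha).trans ih
    · rwa [Finset.erase_eq_of_notMem ha]

/-- Decompose `r e` into fresh edges, keep only the one with range `{y}`, and rename it back
to `e` by a second range decomposition. -/
theorem isMinor_update_range_singleton (H : HyperGraph) {e y : ℕ} (he : e ∈ H.E)
    (hy : y ∈ H.r e) : IsMinor { H with r := Function.update H.r e {y} } H := by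
  classical
  obtain ⟨N, hN⟩ := Finset.exists_nat_subset_range H.E
  have hlt : ∀ a ∈ H.E, a < N := fun a ha => Finset.mem_range.mp (hN ha)
  let H₁ : HyperGraph :=
    ⟨H.V, H.E.erase e ∪ (H.r e).image (N + ·),
      fun n => if N ≤ n then {n - N} else H.r n, fun n => if N ≤ n then H.s e else H.s n⟩
  have split : MinorStep H H₁ := by
    refine Or.inr <| Or.inr <| Or.inr <| Or.inr <| Or.inr <| Or.inr
      ⟨e, he, (N + ·), ⟨y, hy⟩, fun v _ hv => ?_, fun a _ b _ h => ?_, rfl, rfl,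
        fun a ha => ?_, fun v _ => ?_⟩
    · exact (hlt _ hv).not_ge (Nat.le_add_right N v)
    · exact Nat.add_left_cancel h
    · have : ¬ N ≤ a := (hlt a (Finset.mem_of_mem_erase ha)).not_ge
      simp [H₁, this]
    · simp [H₁]
  let H₂ : HyperGraph := { H₁ with E := insert (N + y) (H.E.erase e) }
  have prune : IsMinor H₂ H₁ := by
    refine isMinor_restrictEdges H₁ (Finset.insert_subset ?_ Finset.subset_union_left)
    exact Finset.mem_union_right _ (Finset.mem_image_of_mem _ hy)
  have hr₂ : H₂.r (N + y) = {y} := by simp [H₂, H₁]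
  have hNy : N + y ∉ H.E.erase e := fun h =>
    (hlt _ (Finset.mem_of_mem_erase h)).not_ge (Nat.le_add_right N y)
  have rename : MinorStep H₂ { H with r := Function.update H.r e {y} } := by
    refine Or.inr <| Or.inr <| Or.inr <| Or.inr <| Or.inr <| Or.inr
      ⟨N + y, Finset.mem_insert_self _ _, fun _ => e, by simp [hr₂], fun _ _ h => ?_,
        fun a ha b hb _ => ?_, rfl, ?_, fun a ha => ?_, fun v hv => ?_⟩
    · rcases Finset.mem_insert.mp h with h | h
      · have := hlt e he
        simp only at h
        omega
      · exact Finset.notMem_erase e _ h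
    · simp only [hr₂, Finset.coe_singleton, Set.mem_singleton_iff] at ha hb
      rw [ha, hb]
    · change H.E = (insert (N + y) (H.E.erase e)).erase (N + y) ∪ (H₂.r (N + y)).image _
      rw [hr₂, Finset.erase_insert hNy, Finset.image_singleton, Finset.union_singleton,
        Finset.insert_erase he]
    · obtain ⟨hane, ha⟩ := Finset.mem_erase.mp ha
      obtain ⟨hae, haE⟩ := Finset.mem_erase.mp ((Finset.mem_insert.mp ha).resolve_left hane)
      have : ¬ N ≤ a := (hlt a haE).not_ge
      simp [H₂, H₁, this, hae]
    · rw [hr₂, Finset.mem_singleton] at hv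
      simp [H₂, H₁, hv]
  exact rename.isMinor.trans (prune.trans split.isMinor)

theorem isMinor_of_ranges_singleton (H : HyperGraph) {ρ : ℕ → Finset ℕ}
    (hρ : ∀ e, ρ e = H.r e ∨ e ∈ H.E ∧ ∃ y ∈ H.r e, ρ e = {y}) :
    IsMinor { H with r := ρ } H := by
  classical
  suffices ∀ (S : Finset ℕ) (H : HyperGraph),
      (∀ e, ρ e = H.r e ∨ e ∈ S ∧ e ∈ H.E ∧ ∃ y ∈ H.r e, ρ e = {y}) →
        IsMinor { H with r := ρ } H from
    this H.E H fun e => (hρ e).imp_right fun h => ⟨h.1, h⟩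
  intro S
  induction S using Finset.induction_on with
  | empty =>
    intro H hρ
    have : ρ = H.r := funext fun e => (hρ e).resolve_right (by simp)
    rw [this]
    exact IsMinor.refl H
  | insert a S ha ih =>
    intro H hρ
    by_cases hra : ρ a = H.r a
    · refine ih H fun e => ?_
      rcases hρ e with h | ⟨he, h⟩
      · exact Or.inl h
      · rcases Finset.mem_insert.mp he with rfl | he
        · exact Or.inl hra
        · exact Or.inr ⟨he, h⟩
    · obtain ⟨-, haE, y, hy, hρa⟩ := (hρ a).resolve_left hra
      refine (ih { H with r := Function.update H.r a {y} } fun e => ?_).trans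
        (H.isMinor_update_range_singleton haE hy)
      by_cases hea : e = a
      · subst hea
        simp [hρa]
      · simp only [Function.update_of_ne hea]
        exact (hρ e).imp_right fun ⟨he, h⟩ => ⟨(Finset.mem_insert.mp he).resolve_left hea, h⟩

def absorb (H : HyperGraph) (f g : ℕ) : HyperGraph :=
  ⟨H.V, H.E.erase g, Function.update H.r f (H.r g), H.s⟩

def IsAbsorbable (H : HyperGraph) (g : ℕ) : Prop :=
  ∃ w, H.s g = {w} ∧ (w ∈ H.r g ∨ ∃ f ∈ H.E, f ≠ g ∧ w ∈ H.s f)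

/-- If `w ∉ r g`, a source separation gives `g` a fresh source vertex `u`, which also enters the
range of every edge entering `w`. Those ranges were `{w}`, so they can be shrunk back to `{w}`,
except `r f`, which is shrunk to `{u}`; a forward contraction of `g` then replaces `u` by `r g`. -/
theorem isMinor_absorb {H : HyperGraph} (hWF : H.WF) (hr : ∀ e ∈ H.E, (H.r e).card ≤ 1)
    {f g : ℕ} (hf : f ∈ H.E) (hg : g ∈ H.E) (hfg : f ≠ g) (hlink : (H.r f ∩ H.s g).Nonempty)
    (habs : H.IsAbsorbable g) : IsMinor (H.absorb f g) H := by
  classical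
  obtain ⟨w, hsg, hexit⟩ := habs
  have hsingle : ∀ e ∈ H.E, w ∈ H.r e → H.r e = {w} := fun e he hw =>
    Finset.eq_singleton_iff_unique_mem.mpr
      ⟨hw, fun x hx => Finset.card_le_one.mp (hr e he) x hx w hw⟩
  have hwf : w ∈ H.r f := by
    obtain ⟨x, hx⟩ := hlink
    rw [Finset.mem_inter, hsg, Finset.mem_singleton] at hx
    exact hx.2 ▸ hx.1
  by_cases hwg : w ∈ H.r g
  · have : H.absorb f g = H.deleteEdge g := by
      simp only [absorb, deleteEdge, hsingle g hg hwg, ← hsingle f hf hwf,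
        Function.update_eq_self]
    rw [this]
    exact isMinor_deleteEdge H hg
  obtain ⟨f', hf', hf'g, hwf'⟩ := hexit.resolve_left hwg
  obtain ⟨u, hu⟩ := Infinite.exists_notMem_finset H.V
  have hwV : w ∈ H.V := (hWF g hg).1 (by simp [hsg])
  have huS : ∀ e ∈ H.E, u ∉ H.s e := fun e he h => hu ((hWF e he).1 h)
  have huR : ∀ e ∈ H.E, u ∉ H.r e := fun e he h => hu ((hWF e he).2.1 h)
  let H₁ : HyperGraph := ⟨insert u H.V, H.E,
    fun e => if e ∈ H.E ∧ w ∈ H.r e then insert u (H.r e) else H.r e,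
    fun e => if e ∈ ({g} : Finset ℕ) then insert u ((H.s e).erase w) else H.s e⟩
  have separate : MinorStep H H₁ := by
    refine Or.inr <| Or.inr <| Or.inr <| Or.inr <| Or.inr <| Or.inl
      ⟨{g}, w, u, hwV, hu, Finset.singleton_nonempty g, ?_, rfl, rfl,
        fun e he => ⟨by simp [H₁, he], rfl⟩⟩
    refine Finset.ssubset_iff_of_subset (by simp [hg, hsg]) |>.mpr ⟨f', ?_, ?_⟩
    · simp [hf', hwf']
    · simpa using hf'g
  let H₂ : HyperGraph := { H₁ with r := Function.update H.r f {u} }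
  have retarget : IsMinor H₂ H₁ := by
    refine H₁.isMinor_of_ranges_singleton fun e => ?_
    by_cases hef : e = f
    · subst hef
      exact Or.inr ⟨hf, u, by simp [H₁, hf, hwf]⟩
    · by_cases hw : e ∈ H.E ∧ w ∈ H.r e
      · refine Or.inr ⟨hw.1, w, by simp [H₁, hw], ?_⟩
        simp [hef, hsingle e hw.1 hw.2]
      · exact Or.inl (by simp [H₁, hef, hw])
  have hH₂r : ∀ e, e ≠ f → H₂.r e = H.r e := fun e he => Function.update_of_ne he _ _
  have contract : MinorStep H₂ (H.absorb f g) := by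
    refine Or.inr <| Or.inr <| Or.inl
      ⟨g, hg, u, by simp [H₂, H₁, hsg], fun e he heg => ?_, fun e he hue => ?_,
        (Finset.erase_insert hu).symm, rfl, fun e he => ?_⟩
    · simp [H₂, H₁, heg, hsg, huS e he]
    · have hef : e = f := by
        by_contra hef
        exact huR e he (hH₂r e hef ▸ hue)
      subst hef
      simp [H₂, Function.update_of_ne hfg.symm, huR g hg]
    · obtain ⟨heg, -⟩ := Finset.mem_erase.mp he
      refine ⟨by simp [absorb, H₂, H₁, heg], ?_⟩
      by_cases hef : e = f
      · subst hef
        simp [absorb, H₂, Function.update_of_ne hfg.symm]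
      · simp [absorb, H₂, hef, huR e (Finset.mem_of_mem_erase he)]
  exact contract.isMinor.trans (retarget.trans separate.isMinor)

theorem WF.absorb {H : HyperGraph} (hWF : H.WF) {f g : ℕ} (hg : g ∈ H.E) :
    (H.absorb f g).WF := by
  intro e he
  obtain ⟨-, he⟩ := Finset.mem_erase.mp he
  refine ⟨(hWF e he).1, ?_, (hWF e he).2.2⟩
  by_cases hef : e = f
  · simpa [HyperGraph.absorb, hef] using (hWF g hg).2.1
  · simpa [HyperGraph.absorb, hef] using (hWF e he).2.1

theorem card_range_absorb_le_one {H : HyperGraph} (hr : ∀ e ∈ H.E, (H.r e).card ≤ 1)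
    {f g : ℕ} (hg : g ∈ H.E) : ∀ e ∈ (H.absorb f g).E, ((H.absorb f g).r e).card ≤ 1 := by
  intro e he
  by_cases hef : e = f
  · simpa [absorb, hef] using hr g hg
  · simpa [absorb, hef] using hr e (Finset.mem_of_mem_erase he)

theorem Normal.isAbsorbable {H : HyperGraph} (hN : H.Normal) {g : ℕ} (hg : g ∈ H.E)
    (hs : (H.s g).card = 1) : H.IsAbsorbable g := by
  obtain ⟨w, hw⟩ := Finset.card_eq_one.mp hs
  refine ⟨w, hw, ?_⟩
  rcases hN.2.1 g hg with ⟨f, hf, hfg, x, hx⟩ | ⟨⟨x, hx⟩, hsub⟩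
  · rw [Finset.mem_inter, hw, Finset.mem_singleton] at hx
    exact Or.inr ⟨f, hf, hfg, hx.1 ▸ hx.2⟩
  · have hxw := hsub hx
    rw [hw, Finset.mem_singleton] at hxw
    exact Or.inl (hxw ▸ hx)

end HyperGraph

theorem List.exists_sublist_isChain_nodup_map {α β : Type*} {R : α → α → Prop} (k : α → β)
    (hR : ∀ x a b, R x a → k a = k b → R x b) :
    ∀ (x : α) (l : List α), List.IsChain R (x :: l) → ∃ l', l'.Sublist l ∧
      (x :: l').getLast (List.cons_ne_nil _ _) = (x :: l).getLast (List.cons_ne_nil _ _) ∧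
      List.IsChain R (x :: l') ∧ (l'.map k).Nodup
  | x, [], _ => ⟨[], List.Sublist.refl _, rfl, List.IsChain.singleton x, List.nodup_nil⟩
  | x, a :: t, h => by
    obtain ⟨hxa, ht⟩ := List.isChain_cons_cons.mp h
    obtain ⟨t', ht't, hlast, hchain, hnodup⟩ := exists_sublist_isChain_nodup_map k hR a t ht
    by_cases hka : k a ∈ t'.map k
    · obtain ⟨b, hb, hkb⟩ := List.mem_map.mp hka
      obtain ⟨p, q, rfl⟩ := List.append_of_mem hb
      refine ⟨b :: q, (List.sublist_append_right p _).trans (ht't.cons a), ?_,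
        List.isChain_cons_cons.mpr ⟨hR x a b hxa hkb.symm, hchain.suffix ⟨a :: p, rfl⟩⟩,
        hnodup.sublist ((List.sublist_append_right p _).map k)⟩
      simpa using hlast
    · exact ⟨a :: t', ht't.cons_cons a, by simpa using hlast,
        List.isChain_cons_cons.mpr ⟨hxa, hchain⟩, List.nodup_cons.mpr ⟨hka, hnodup⟩⟩

namespace HyperGraph

def pathContraction (H : HyperGraph) (f : ℕ) (l : List ℕ) : HyperGraph :=
  ⟨H.V, H.E \ l.toFinset,
    Function.update H.r f (H.r ((f :: l).getLast (List.cons_ne_nil _ _))), H.s⟩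

theorem pathContraction_nil (H : HyperGraph) (f : ℕ) : H.pathContraction f [] = H := by
  simp [pathContraction]

theorem pathContraction_cons (H : HyperGraph) {f g : ℕ} {l : List ℕ} (hf : f ∉ l) :
    H.pathContraction f (g :: l) = (H.absorb f g).pathContraction f l := by
  simp only [pathContraction, absorb, Function.update_idem, HyperGraph.mk.injEq, true_and,
    and_true]
  constructor
  · ext e
    simp only [Finset.mem_sdiff, Finset.mem_erase, List.toFinset_cons, Finset.mem_insert,
      List.mem_toFinset]
    tauto
  · congr 1
    cases l with
    | nil => simp
    | cons c l =>
      have hlast : (c :: l).getLast (List.cons_ne_nil _ _) ≠ f := fun h =>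
        hf (h ▸ List.getLast_mem _)
      simp [Function.update_of_ne hlast]

def IsAbsorbablePath (H : HyperGraph) (f : ℕ) (l : List ℕ) : Prop :=
  H.IsPath (f :: l) ∧ f ∉ l ∧ (l.map H.s).Nodup ∧ ∀ g ∈ l, H.IsAbsorbable g

theorem IsAbsorbablePath.absorb {H : HyperGraph} {f g : ℕ} {l : List ℕ}
    (h : H.IsAbsorbablePath f (g :: l)) : (H.absorb f g).IsAbsorbablePath f l := by
  obtain ⟨⟨-, hmem, hchain⟩, hf, hnodup, habs⟩ := h
  obtain ⟨hfg, hfl⟩ := List.ne_and_not_mem_of_not_mem_cons hf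
  obtain ⟨hsg, hnodup⟩ := List.nodup_cons.mp hnodup
  have hgl : g ∉ l := fun h => hsg (List.mem_map_of_mem h)
  have hr : ∀ e ∈ l, (H.absorb f g).r e = H.r e := fun e he =>
    Function.update_of_ne (fun h : e = f => hfl (h ▸ he)) _ _
  refine ⟨⟨List.cons_ne_nil _ _, fun e he => ?_, ?_⟩, hfl, hnodup, fun g' hg' => ?_⟩
  · rcases List.mem_cons.mp he with rfl | he
    · exact Finset.mem_erase.mpr ⟨hfg, hmem e List.mem_cons_self⟩
    · exact Finset.mem_erase.mpr ⟨fun h => hgl (h ▸ he), hmem e (by simp [he])⟩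
  · cases l with
    | nil => exact List.IsChain.singleton f
    | cons c l =>
      obtain ⟨hgc, hcl⟩ := List.isChain_cons_cons.mp (List.isChain_cons_cons.mp hchain).2
      refine List.isChain_cons_cons.mpr ⟨by simpa [HyperGraph.absorb] using hgc, ?_⟩
      exact hcl.imp_of_mem_imp fun a b ha _ hab => by
        rw [hr a ha]
        exact hab
  · obtain ⟨w, hw, hexit⟩ := habs g' (List.mem_cons_of_mem g hg')
    refine ⟨w, hw, hexit.imp (fun h => (hr g' hg').symm ▸ h) fun ⟨f', hf', hf'g', hwf'⟩ =>
      ⟨f', Finset.mem_erase.mpr ⟨?_, hf'⟩, hf'g', hwf'⟩⟩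
    rintro rfl
    obtain ⟨w', hw', -⟩ := habs f' List.mem_cons_self
    rw [hw', Finset.mem_singleton] at hwf'
    exact hsg (List.mem_map.mpr ⟨g', hg', by rw [hw, hw', hwf']⟩)

theorem isMinor_pathContraction_of_isAbsorbablePath {f : ℕ} {l : List ℕ} :
    ∀ {H : HyperGraph}, H.WF → (∀ e ∈ H.E, (H.r e).card ≤ 1) → H.IsAbsorbablePath f l →
      IsMinor (H.pathContraction f l) H := by
  induction l with
  | nil =>
    intro H _ _ _
    rw [pathContraction_nil]
    exact IsMinor.refl H
  | cons g l ih =>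
    intro H hWF hr h
    have hK := h.absorb
    obtain ⟨⟨-, hmem, hchain⟩, hf, -, habs⟩ := h
    have hg : g ∈ H.E := hmem g (by simp)
    rw [pathContraction_cons H (fun h' => hf (List.mem_cons_of_mem g h'))]
    exact (ih (hWF.absorb hg) (card_range_absorb_le_one hr hg) hK).trans
      (isMinor_absorb hWF hr (hmem f (by simp)) hg (fun h' => hf (h' ▸ List.mem_cons_self))
        (List.isChain_cons_cons.mp hchain).1 (habs g List.mem_cons_self))

theorem isMinor_pathContraction {H : HyperGraph} (hWF : H.WF) (hN : H.Normal) {f : ℕ}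
    {l : List ℕ} (hpath : H.IsPath (f :: l)) (hs : ∀ g ∈ l, (H.s g).card = 1) (hf : f ∉ l) :
    IsMinor (H.pathContraction f l) H := by
  obtain ⟨l', hl'l, hlast, hchain, hnodup⟩ :=
    List.exists_sublist_isChain_nodup_map H.s (fun _ _ _ h hab => hab ▸ h) f l hpath.2.2
  have hl' : H.IsAbsorbablePath f l' :=
    ⟨⟨List.cons_ne_nil _ _, fun e he => hpath.2.1 e ((hl'l.cons_cons f).subset he), hchain⟩,
      fun h => hf (hl'l.subset h), hnodup, fun g hg =>
        hN.isAbsorbable (hpath.2.1 g (List.mem_cons_of_mem f (hl'l.subset hg)))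
          (hs g (hl'l.subset hg))⟩
  have hrestrict :
      H.pathContraction f l = { H.pathContraction f l' with E := H.E \ l.toFinset } := by
    simp [pathContraction, hlast]
  rw [hrestrict]
  exact (isMinor_restrictEdges _ (Finset.sdiff_subset_sdiff subset_rfl
    fun _ he => List.mem_toFinset.mpr (hl'l.subset (List.mem_toFinset.mp he)))).trans
    (isMinor_pathContraction_of_isAbsorbablePath hWF hN.1 hl')

end HyperGraph

open HyperGraph in
/-- Path contraction: if `f₁ :: l` is a path in a normal hypergraph `H` with
`|s g| = 1` for every edge `g` of `l`, then the hypergraph with the same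
vertices, edge set `E \ l`, unchanged sources, unchanged ranges except that
the range of `f₁` becomes the range of the last edge of the path, is a
hypergraph minor of `H`. -/
theorem path_contraction_minor (H : HyperGraph) (hWF : H.WF) (hN : H.Normal)
    (f₁ : ℕ) (l : List ℕ) (hpath : H.IsPath (f₁ :: l))
    (hs : ∀ g ∈ l, (H.s g).card = 1) :
    ∃ HΔ : HyperGraph, IsMinor HΔ H ∧
      HΔ.V = H.V ∧
      HΔ.E = H.E \ l.toFinset ∧
      (∀ e ∈ HΔ.E, HΔ.s e = H.s e) ∧
      (∀ e ∈ HΔ.E, e ≠ f₁ → HΔ.r e = H.r e) ∧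
      (f₁ ∈ HΔ.E →
        HΔ.r f₁ = H.r ((f₁ :: l).getLast (List.cons_ne_nil _ _))) := by
  by_cases hf : f₁ ∈ l
  · refine ⟨{ H with E := H.E \ l.toFinset }, isMinor_restrictEdges H Finset.sdiff_subset,
      rfl, rfl, fun _ _ => rfl, fun _ _ _ => rfl, fun h => ?_⟩
    exact absurd (List.mem_toFinset.mpr hf) (Finset.mem_sdiff.mp h).2
  · exact ⟨H.pathContraction f₁ l, isMinor_pathContraction hWF hN hpath hs hf, rfl, rfl,
      fun _ _ => rfl, fun _ _ he => Function.update_of_ne he _ _,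
      fun _ => Function.update_self _ _ _⟩
end

section
/- Let HΓ be a finite hypergraph and let v be a vertex. Obtain HΓ' from HΓ by cutting all edges e with s(e) = {v} or r(e) = {v}. Then the set S = {v} ∪ {e ∈ E^1(HΓ') : s(e) = {v}} is ideally closed in HΓ'. -/
/-! Basic notions of (finite, directed) hypergraphs, following
Trieb–Weber-style hypergraph C*-algebra combinatorics. Vertices and edges
are labelled by natural numbers. -/

structure DHypergraph where
  V : Finset ℕ
  E : Finset ℕ
  r : ℕ → Finset ℕ
  s : ℕ → Finset ℕ

namespace DHypergraph

/-- Well-formedness: sources and ranges of edges consist of vertices,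
and every edge has a nonempty source. -/
def WF (H : DHypergraph) : Prop :=
  ∀ e ∈ H.E, H.s e ⊆ H.V ∧ H.r e ⊆ H.V ∧ (H.s e).Nonempty

/-- A vertex is a sink if no edge has it in its source. -/
def IsSink (H : DHypergraph) (v : ℕ) : Prop := ∀ e ∈ H.E, v ∉ H.s e

/-- A path is a nonempty list of edges such that the range of each edge
meets the source of the next one. -/
def IsPath (H : DHypergraph) (l : List ℕ) : Prop :=
  l ≠ [] ∧ (∀ e ∈ l, e ∈ H.E) ∧
    List.Chain' (fun a b => (H.r a ∩ H.s b).Nonempty) l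

/-- There is a path starting with edge `e` and ending with edge `f`. -/
def PathTo (H : DHypergraph) (e f : ℕ) : Prop :=
  ∃ l : List ℕ, H.IsPath l ∧ l.head? = some e ∧ l.getLast? = some f

/-- The set of edges from which there is a path ending with `f₀`
(the "easy edge set" when `f₀` is easy). -/
noncomputable def easySet (H : DHypergraph) (f₀ : ℕ) : Finset ℕ :=
  @Finset.filter ℕ (fun e => H.PathTo e f₀) (fun _ => Classical.propDecidable _) H.E

/-- An edge `f₀` is easy if every edge from which there is a path to `f₀`
has exactly one vertex in its source and exactly one vertex in its range. -/
def IsEasyEdge (H : DHypergraph) (f₀ : ℕ) : Prop :=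
  f₀ ∈ H.E ∧ ∀ f ∈ H.easySet f₀, (H.s f).card = 1 ∧ (H.r f).card = 1

/-- An easy cycle of length `n`, given by edges `f 0, …, f (n-1)` and
range vertices `w 0, …, w (n-1)` (indices taken mod `n`). -/
def IsEasyCycle (H : DHypergraph) (n : ℕ) (f w : ℕ → ℕ) : Prop :=
  0 < n ∧ (∀ i < n, f i ∈ H.E) ∧
  (∀ i < n, (H.r (f i) ∩ H.s (f ((i + 1) % n))).Nonempty) ∧
  (∀ i < n, ∀ j < n, (H.r (f i) ∩ H.s (f j)).Nonempty → j = (i + 1) % n) ∧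
  (∀ i < n, H.r (f i) = {w i}) ∧
  (∀ i < n, ∀ e ∈ H.E, w i ∈ H.r e → e = f i) ∧
  (∀ i < n, ∀ e ∈ H.E, w i ∈ H.s e → e = f ((i + 1) % n))

/-- A simple quasisink: at most one outgoing edge, which must have empty
range, and at most one incoming edge. -/
def IsSimpleQuasisink (H : DHypergraph) (w : ℕ) : Prop :=
  (∀ e ∈ H.E, ∀ f ∈ H.E, w ∈ H.s e → w ∈ H.s f → e = f) ∧
  (∀ e ∈ H.E, w ∈ H.s e → H.r e = ∅) ∧
  (∀ e ∈ H.E, ∀ f ∈ H.E, w ∈ H.r e → w ∈ H.r f → e = f)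

/-- Normality of a hypergraph. -/
def Normal (H : DHypergraph) : Prop :=
  (∀ e ∈ H.E, (H.r e).card ≤ 1) ∧
  (∀ e ∈ H.E,
    (∃ f ∈ H.E, f ≠ e ∧ (H.s e ∩ H.s f).Nonempty) ∨
    ((H.r e).Nonempty ∧ H.r e ⊆ H.s e)) ∧
  (∀ e ∈ H.E, ∀ f ∈ H.E, e ≠ f → (H.s e ∩ H.s f).card = 1 →
    ((H.s e).card = 1 ∧ (H.s f).card = 1) ∨
    ∃ g ∈ H.E, g ≠ e ∧ (H.s e ∩ H.s f) ⊂ (H.s e ∩ H.s g))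

/-- A reduced hypergraph: normal, no easy edge, no easy cycle, and no
edge ending in a simple quasisink. -/
def Reduced (H : DHypergraph) : Prop :=
  H.Normal ∧ (¬∃ f₀, H.IsEasyEdge f₀) ∧ (¬∃ n f w, H.IsEasyCycle n f w) ∧
  ¬∃ f ∈ H.E, ∃ w, H.r f = {w} ∧ H.IsSimpleQuasisink w

/-- A set of vertices `SV` and edges `SE` is ideally closed. -/
def IdeallyClosed (H : DHypergraph) (SV SE : Finset ℕ) : Prop :=
  SV ⊆ H.V ∧ SE ⊆ H.E ∧
  (∀ e ∈ SE, H.r e ⊆ SV) ∧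
  (∀ e ∈ H.E, (H.s e ⊆ SV ∨ ((H.r e).Nonempty ∧ H.r e ⊆ SV)) → e ∈ SE) ∧
  (∀ v ∈ H.V, ¬H.IsSink v → (∀ e ∈ H.E, v ∈ H.s e → e ∈ SE) → v ∈ SV)

/-! ### The seven minor operations, as relations -/

def IsVertexDeletion (H H' : DHypergraph) : Prop :=
  ∃ v ∈ H.V,
    H'.V = H.V.erase v ∧
    H'.E = H.E.filter (fun e => ¬ H.s e = {v}) ∧
    ∀ e ∈ H'.E, H'.r e = (H.r e).erase v ∧ H'.s e = (H.s e).erase v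

def IsEdgeDeletion (H H' : DHypergraph) : Prop :=
  ∃ f ∈ H.E,
    H'.V = H.V ∧ H'.E = H.E.erase f ∧
    ∀ e ∈ H'.E, H'.r e = H.r e ∧ H'.s e = H.s e

def IsForwardContraction (H H' : DHypergraph) : Prop :=
  ∃ f ∈ H.E, ∃ w,
    H.s f = {w} ∧
    (∀ e ∈ H.E, e ≠ f → ¬(H.s e ∩ H.s f).Nonempty) ∧
    (∀ e ∈ H.E, w ∈ H.r e → ¬(H.r e ∩ H.r f).Nonempty) ∧
    H'.V = H.V.erase w ∧ H'.E = H.E.erase f ∧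
    ∀ e ∈ H'.E,
      H'.s e = H.s e ∧
      H'.r e = (if w ∈ H.r e then (H.r e).erase w ∪ H.r f else H.r e)

def IsBackwardContractionAt (H H' : DHypergraph) (f : ℕ) : Prop :=
  f ∈ H.E ∧ ∃ w,
    H.r f = {w} ∧
    (∀ e ∈ H.E, e ≠ f → ¬(H.s e ∩ H.s f).Nonempty) ∧
    (∀ e ∈ H.E, (H.r e ∩ H.s f).Nonempty → w ∉ H.r e) ∧
    H'.V = H.V.erase w ∧ H'.E = H.E.erase f ∧
    ∀ e ∈ H'.E,
      H'.r e = (if w ∈ H.r e then (H.r e).erase w ∪ H.s f else H.r e) ∧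
      H'.s e = (if w ∈ H.s e then (H.s e).erase w ∪ H.s f else H.s e)

def IsBackwardContraction (H H' : DHypergraph) : Prop :=
  ∃ f, IsBackwardContractionAt H H' f

def IsEdgeCutting (H H' : DHypergraph) : Prop :=
  ∃ f ∈ H.E,
    H'.V = H.V ∧ H'.E = H.E ∧
    (∀ e ∈ H.E, H'.s e = H.s e) ∧
    (∀ e ∈ H.E, e ≠ f → H'.r e = H.r e) ∧
    H'.r f = ∅

def IsSourceSeparation (H H' : DHypergraph) : Prop :=
  ∃ (F : Finset ℕ) (w w' : ℕ),
    w ∈ H.V ∧ w' ∉ H.V ∧ F.Nonempty ∧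
    F ⊂ H.E.filter (fun e => w ∈ H.s e) ∧
    H'.V = insert w' H.V ∧ H'.E = H.E ∧
    ∀ e ∈ H.E,
      H'.r e = (if w ∈ H.r e then insert w' (H.r e) else H.r e) ∧
      H'.s e = (if e ∈ F then insert w' ((H.s e).erase w) else H.s e)

def IsRangeDecomposition (H H' : DHypergraph) : Prop :=
  ∃ f ∈ H.E, ∃ ι : ℕ → ℕ,
    (H.r f).Nonempty ∧
    (∀ v ∈ H.r f, ι v ∉ H.E) ∧
    Set.InjOn ι (H.r f : Set ℕ) ∧
    H'.V = H.V ∧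
    H'.E = H.E.erase f ∪ (H.r f).image ι ∧
    (∀ e ∈ H.E.erase f, H'.r e = H.r e ∧ H'.s e = H.s e) ∧
    (∀ v ∈ H.r f, H'.r (ι v) = {v} ∧ H'.s (ι v) = H.s f)

/-- One application of a minor operation. -/
def MinorStep (H H' : DHypergraph) : Prop :=
  IsVertexDeletion H H' ∨ IsEdgeDeletion H H' ∨ IsForwardContraction H H' ∨
  IsBackwardContraction H H' ∨ IsEdgeCutting H H' ∨ IsSourceSeparation H H' ∨
  IsRangeDecomposition H H'

/-- `IsMinor H' H` : the hypergraph `H'` is obtained from `H` by a finite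
combination of minor operations (`H' ≤ H`). -/
def IsMinor (H' H : DHypergraph) : Prop := Relation.ReflTransGen MinorStep H H'

/-! ### The four forbidden minors (up to labelling) -/

def IsHGamma1 (H : DHypergraph) : Prop :=
  ∃ v₁ v₂ v₃ e f : ℕ, v₁ ≠ v₂ ∧ v₁ ≠ v₃ ∧ v₂ ≠ v₃ ∧ e ≠ f ∧
    H.V = {v₁, v₂, v₃} ∧ H.E = {e, f} ∧
    H.s e = {v₁, v₂, v₃} ∧ H.s f = {v₁, v₂, v₃} ∧ H.r e = ∅ ∧ H.r f = ∅

def IsHGamma2 (H : DHypergraph) : Prop :=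
  ∃ v₁ v₂ e f g : ℕ, v₁ ≠ v₂ ∧ e ≠ f ∧ e ≠ g ∧ f ≠ g ∧
    H.V = {v₁, v₂} ∧ H.E = {e, f, g} ∧
    H.s e = {v₁, v₂} ∧ H.s f = {v₁, v₂} ∧ H.s g = {v₁, v₂} ∧
    H.r e = ∅ ∧ H.r f = ∅ ∧ H.r g = ∅

def IsHGamma3 (H : DHypergraph) : Prop :=
  ∃ v w e f : ℕ, v ≠ w ∧ e ≠ f ∧
    H.V = {v, w} ∧ H.E = {e, f} ∧
    H.s e = {v, w} ∧ H.s f = {v, w} ∧ H.r e = ∅ ∧ H.r f = {w}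

def IsHGamma4 (H : DHypergraph) : Prop :=
  ∃ v₁ v₂ w e f : ℕ, v₁ ≠ v₂ ∧ v₁ ≠ w ∧ v₂ ≠ w ∧ e ≠ f ∧
    H.V = {v₁, v₂, w} ∧ H.E = {e, f} ∧
    H.s e = {v₁, v₂} ∧ H.s f = {v₁, v₂} ∧ H.r e = {w} ∧ H.r f = {w}

/-! ### Deletion of sets of vertices and edges -/

/-- Delete the vertices `SV` and edges `SE` (an edge whose source becomes
empty is removed as well). -/
def deleteSet (H : DHypergraph) (SV SE : Finset ℕ) : DHypergraph where
  V := H.V \ SV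
  E := (H.E \ SE).filter (fun e => ¬ H.s e ⊆ SV)
  r := fun e => H.r e \ SV
  s := fun e => H.s e \ SV

/-- Delete a single vertex. -/
def deleteVertex (H : DHypergraph) (v : ℕ) : DHypergraph where
  V := H.V.erase v
  E := H.E.filter (fun e => ¬ H.s e = {v})
  r := fun e => (H.r e).erase v
  s := fun e => (H.s e).erase v

/-- Delete a single edge. -/
def deleteEdge (H : DHypergraph) (f : ℕ) : DHypergraph where
  V := H.V
  E := H.E.erase f
  r := H.r
  s := H.s

/-- Delete an item: `Sum.inl v` is a vertex, `Sum.inr f` is an edge. -/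
def deleteItem (H : DHypergraph) : ℕ ⊕ ℕ → DHypergraph
  | Sum.inl v => H.deleteVertex v
  | Sum.inr f => H.deleteEdge f

/-- Delete the items of a list one at a time, from the left. -/
def deleteList (H : DHypergraph) (l : List (ℕ ⊕ ℕ)) : DHypergraph :=
  l.foldl deleteItem H

/-- Range decomposition applied simultaneously to all edges: an edge `e`
with at least two vertices in its range is replaced by the edges
`Nat.pair e (v+1)` for `v ∈ r e`, with range `{v}` and source `s e`;
all other edges are kept (renamed `Nat.pair e 0`). -/
def rangeDecomposeAll (H : DHypergraph) : DHypergraph where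
  V := H.V
  E := H.E.biUnion (fun e =>
    if (H.r e).card ≤ 1 then {Nat.pair e 0}
    else (H.r e).image (fun v => Nat.pair e (v + 1)))
  r := fun n => if n.unpair.2 = 0 then H.r n.unpair.1 else {n.unpair.2 - 1}
  s := fun n => H.s n.unpair.1

theorem ideallyClosed_singleton (H : DHypergraph) {v : ℕ} (hv : v ∈ H.V)
    (hs : ∀ e ∈ H.E, (H.s e).Nonempty) (hr_cut : ∀ e ∈ H.E, H.s e = {v} → H.r e = ∅)
    (hr_ne : ∀ e ∈ H.E, H.r e ≠ {v}) :
    H.IdeallyClosed {v} (H.E.filter (fun e => H.s e = {v})) := by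
  refine ⟨Finset.singleton_subset_iff.mpr hv, Finset.filter_subset _ _, ?_, ?_, ?_⟩
  · intro e he
    rw [Finset.mem_filter] at he
    simp [hr_cut e he.1 he.2]
  · rintro e he (hsub | ⟨hne, hsub⟩)
    · exact Finset.mem_filter.mpr ⟨he, ((hs e he).subset_singleton_iff).mp hsub⟩
    · exact absurd (hne.subset_singleton_iff.mp hsub) (hr_ne e he)
  · intro w _ hw hall
    obtain ⟨e, he, hwe⟩ : ∃ e ∈ H.E, w ∈ H.s e := by simpa [IsSink] using hw
    rwa [(Finset.mem_filter.mp (hall e he hwe)).2] at hwe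

end DHypergraph

open DHypergraph in
/-- Let `H'` be obtained from `H` by cutting all edges `e` with
`s e = {v}` or `r e = {v}`. Then `S = {v} ∪ {e ∈ E : s e = {v}}` is
ideally closed in `H'`. -/
theorem cut_at_vertex_ideallyClosed (H : DHypergraph) (hWF : H.WF)
    (v : ℕ) (hv : v ∈ H.V)
    (H' : DHypergraph)
    (hV : H'.V = H.V) (hE : H'.E = H.E)
    (hr : ∀ e, H'.r e = if H.s e = {v} ∨ H.r e = {v} then ∅ else H.r e)
    (hs : ∀ e, H'.s e = H.s e) :
    H'.IdeallyClosed {v} (H.E.filter (fun e => H.s e = {v})) := by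
  have hSE : H.E.filter (fun e => H.s e = {v}) = H'.E.filter (fun e => H'.s e = {v}) := by
    simp only [hE, hs]
  rw [hSE]
  refine H'.ideallyClosed_singleton (hV ▸ hv) (fun e he => hs e ▸ (hWF e (hE ▸ he)).2.2)
    (fun e _ hse => by rw [hr, if_pos (Or.inl (hs e ▸ hse))]) (fun e _ => ?_)
  rw [hr]
  split_ifs with hcut
  · exact (Finset.singleton_ne_empty v).symm
  · exact fun h => hcut (Or.inr h)
end

section
/- Let HΓ be a finite hypergraph and suppose HΔ is obtained from HΓ by deleting an ideally closed set S ⊆ E^0(HΓ) ∪ E^1(HΓ). Then: (a) every edge of HΔ with nonempty range in HΓ still has nonempty range in HΔ; and (b) every vertex of HΔ that is a sink in HΔ was already a sink in HΓ. -/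
namespace NatHypergraph

namespace IdeallyClosed

variable {H : NatHypergraph} {SV SE : Finset ℕ}

theorem mem_of_r_subset (hIC : H.IdeallyClosed SV SE) {e : ℕ} (he : e ∈ H.E)
    (hne : (H.r e).Nonempty) (hsub : H.r e ⊆ SV) : e ∈ SE :=
  hIC.2.2.2.1 e he (Or.inr ⟨hne, hsub⟩)

theorem mem_of_not_isSink (hIC : H.IdeallyClosed SV SE) {v : ℕ} (hv : v ∈ H.V)
    (hv' : ¬H.IsSink v) (hout : ∀ e ∈ H.E, v ∈ H.s e → e ∈ SE) : v ∈ SV :=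
  hIC.2.2.2.2 v hv hv' hout

end IdeallyClosed

section deleteSet

variable {H : NatHypergraph} {SV SE : Finset ℕ}

@[simp]
theorem mem_deleteSet_E {e : ℕ} :
    e ∈ (H.deleteSet SV SE).E ↔ (e ∈ H.E ∧ e ∉ SE) ∧ ¬H.s e ⊆ SV := by
  simp [deleteSet]

@[simp]
theorem mem_deleteSet_V {v : ℕ} : v ∈ (H.deleteSet SV SE).V ↔ v ∈ H.V ∧ v ∉ SV :=
  Finset.mem_sdiff

theorem deleteSet_r_nonempty_iff {e : ℕ} :
    ((H.deleteSet SV SE).r e).Nonempty ↔ ¬H.r e ⊆ SV :=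
  Finset.sdiff_nonempty

theorem isSink_deleteSet_iff {v : ℕ} (hv : v ∉ SV) :
    (H.deleteSet SV SE).IsSink v ↔ ∀ e ∈ H.E, v ∈ H.s e → e ∈ SE := by
  refine ⟨fun hsink e he hve => ?_, fun hout e he hve => ?_⟩
  · by_contra heSE
    have hmem : e ∈ (H.deleteSet SV SE).E :=
      mem_deleteSet_E.2 ⟨⟨he, heSE⟩, fun hsub => hv (hsub hve)⟩
    exact hsink e hmem (Finset.mem_sdiff.2 ⟨hve, hv⟩)
  · obtain ⟨⟨heE, heSE⟩, -⟩ := mem_deleteSet_E.1 he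
    exact heSE (hout e heE (Finset.mem_sdiff.1 hve).1)

theorem IdeallyClosed.deleteSet_r_nonempty (hIC : H.IdeallyClosed SV SE) {e : ℕ}
    (he : e ∈ (H.deleteSet SV SE).E) (hne : (H.r e).Nonempty) :
    ((H.deleteSet SV SE).r e).Nonempty := by
  obtain ⟨⟨heE, heSE⟩, -⟩ := mem_deleteSet_E.1 he
  exact deleteSet_r_nonempty_iff.2 fun hsub => heSE (hIC.mem_of_r_subset heE hne hsub)

theorem IdeallyClosed.isSink_of_isSink_deleteSet (hIC : H.IdeallyClosed SV SE) {v : ℕ}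
    (hv : v ∈ (H.deleteSet SV SE).V) (hsink : (H.deleteSet SV SE).IsSink v) :
    H.IsSink v := by
  obtain ⟨hvV, hvSV⟩ := mem_deleteSet_V.1 hv
  by_contra hns
  exact hvSV (hIC.mem_of_not_isSink hvV hns ((isSink_deleteSet_iff hvSV).1 hsink))

end deleteSet

end NatHypergraph

open NatHypergraph in
/-- If `HΔ` is obtained from `H` by deleting an ideally closed set, then
(a) every edge of `HΔ` whose range in `H` was nonempty still has nonempty
range in `HΔ`, and (b) every vertex of `HΔ` that is a sink in `HΔ` was
already a sink in `H`. -/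
theorem deleteSet_ideallyClosed_preserves (H : NatHypergraph)
    (SV SE : Finset ℕ) (hIC : H.IdeallyClosed SV SE) :
    (∀ e ∈ (H.deleteSet SV SE).E, (H.r e).Nonempty →
      ((H.deleteSet SV SE).r e).Nonempty) ∧
    (∀ v ∈ (H.deleteSet SV SE).V, (H.deleteSet SV SE).IsSink v →
      H.IsSink v) :=
  ⟨fun _ he hne => hIC.deleteSet_r_nonempty he hne,
    fun _ hv hsink => hIC.isSink_of_isSink_deleteSet hv hsink⟩
end
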